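/- arXiv:1901.09094 — 5 statements merged into one kernel-verified Lean document; each statement's English description precedes it below -/
import Mathlib

section
/- Let $\{Z_j\}_{j=1}^\infty$ be a stochastic process adapted to a filtration $\{\mathcal{F}_j\}_{j=-1}^\infty$, let $N > 0$ be an even integer, and suppose $0 \le Z_j \le B$ almost surely and $\mathrm{E}[Z_j \mid \mathcal{F}_{j-2}] \le m$ almost surely for all $j \ge 1$. Then for any $\lambda \ge 2Nm$, $\Pr\left(\sum_{j=1}^N Z_j \ge \lambda\right) \le 2\exp\left(-\frac{3\lambda}{32B}\right)$. -/
/-!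
Split the sum into its odd- and even-indexed halves. Within a half consecutive indices differ
by 2, so every term is measurable for the σ-algebra on which the conditional mean of the next
term is bounded by `m`. With `t = log 2 / B`, Bernoulli's inequality `2 ^ x ≤ 1 + x` on
`[0, 1]` gives `exp (t z) ≤ 1 + z / B` on `[0, B]`, hence
`E[exp (t Z_j) | ℱ_{j-2}] ≤ 1 + m / B ≤ exp (m / B)`, and peeling off the last factor
repeatedly bounds the moment generating function of a half of `n = N / 2` terms by
`exp (n m / B)`. Chernoff's bound at level `λ / 2` then gives `exp (-t λ / 2 + n m / B)` for
each half, which is at most `exp (-3 λ / (32 B))` because `n m ≤ λ / 4` and `log 2 > 11 / 16`.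
-/

open MeasureTheory ProbabilityTheory Finset

lemma exp_log_two_div_mul_le_one_add {B z : ℝ} (hB : 0 < B) (hz0 : 0 ≤ z) (hzB : z ≤ B) :
    Real.exp (Real.log 2 / B * z) ≤ 1 + z / B := by
  have h := rpow_one_add_le_one_add_mul_self (s := 1) (by norm_num) (div_nonneg hz0 hB.le)
    ((div_le_one hB).2 hzB)
  rw [Real.rpow_def_of_pos (by norm_num)] at h
  norm_num at h
  convert h using 2
  ring

lemma Finset.sum_range_two_mul {M : Type*} [AddCommMonoid M] (f : ℕ → M) (n : ℕ) :
    ∑ i ∈ range (2 * n), f i = ∑ i ∈ range n, f (2 * i) + ∑ i ∈ range n, f (2 * i + 1) := by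
  induction n with
  | zero => simp
  | succ n ih =>
    rw [show 2 * (n + 1) = 2 * n + 1 + 1 by ring, sum_range_succ, sum_range_succ, ih,
      sum_range_succ, sum_range_succ]
    abel

lemma Finset.sum_Icc_one_two_mul {M : Type*} [AddCommMonoid M] (f : ℤ → M) (n : ℕ) :
    ∑ j ∈ Icc 1 (2 * n : ℤ), f j =
      ∑ i ∈ range n, f (2 * i + 1) + ∑ i ∈ range n, f (2 * i + 2) := by
  rw [Int.Icc_eq_finset_map, sum_map, show (2 * n + 1 - 1 : ℤ).toNat = 2 * n by omega,
    sum_range_two_mul]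
  congr 1 <;> refine sum_congr rfl fun i _ => congrArg f ?_ <;> simp <;> ring

section

variable {Ω : Type*} {𝒜 : MeasurableSpace Ω} [m0 : MeasurableSpace Ω] {μ : Measure Ω}

lemma integrable_exp_mul_of_ae_le [IsFiniteMeasure μ] {f : Ω → ℝ}
    (hf : AEStronglyMeasurable f μ) {t C : ℝ} (ht : 0 ≤ t) (hC : ∀ᵐ ω ∂μ, f ω ≤ C) :
    Integrable (fun ω => Real.exp (t * f ω)) μ := by
  refine .of_bound (Real.continuous_exp.comp_aestronglyMeasurable (hf.const_mul t))
    (Real.exp (t * C)) ?_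
  filter_upwards [hC] with ω hω
  rw [Real.norm_of_nonneg (Real.exp_pos _).le]
  gcongr

lemma integrable_exp_mul_sum_range [IsFiniteMeasure μ] {Y : ℕ → Ω → ℝ}
    (hY : ∀ i, AEStronglyMeasurable (Y i) μ) {t B : ℝ} (ht : 0 ≤ t)
    (hbdd : ∀ i, ∀ᵐ ω ∂μ, Y i ω ≤ B) (k : ℕ) :
    Integrable (fun ω => Real.exp (t * ∑ i ∈ range k, Y i ω)) μ := by
  refine integrable_exp_mul_of_ae_le (C := k * B)
    (Finset.aestronglyMeasurable_fun_sum _ fun i _ => hY i) ht ?_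
  filter_upwards [ae_all_iff.2 hbdd] with ω hω
  simpa using sum_le_sum fun i (_ : i ∈ range k) => hω i

lemma measureReal_add_ge_le [IsFiniteMeasure μ] (X Y : Ω → ℝ) (a b : ℝ) :
    μ.real {ω | a + b ≤ X ω + Y ω} ≤ μ.real {ω | a ≤ X ω} + μ.real {ω | b ≤ Y ω} := by
  refine (measureReal_mono fun ω hω => ?_).trans (measureReal_union_le _ _)
  by_contra h
  simp only [Set.mem_union, Set.mem_ofPred_eq, not_or, not_le] at h hω
  linarith

variable {B m : ℝ}

lemma condExp_exp_mul_le [IsFiniteMeasure μ] (h𝒜 : 𝒜 ≤ m0) {X : Ω → ℝ}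
    (hX : AEStronglyMeasurable X μ) (hB : 0 < B) (hbdd : ∀ᵐ ω ∂μ, 0 ≤ X ω ∧ X ω ≤ B)
    (hcond : ∀ᵐ ω ∂μ, μ[X | 𝒜] ω ≤ m) :
    μ[fun ω => Real.exp (Real.log 2 / B * X ω) | 𝒜] ≤ᵐ[μ] fun _ => Real.exp (m / B) := by
  have hX_int : Integrable X μ := .of_bound hX B <| by
    filter_upwards [hbdd] with ω hω
    exact (Real.norm_of_nonneg hω.1).trans_le hω.2
  have hexp_int := integrable_exp_mul_of_ae_le hX
    (div_nonneg (Real.log_nonneg one_le_two) hB.le) (hbdd.mono fun _ h => h.2)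
  have hlin : μ[fun ω => 1 + X ω / B | 𝒜] =ᵐ[μ] fun ω => 1 + μ[X | 𝒜] ω / B := by
    have hsplit : (fun ω => 1 + X ω / B) = (fun _ => (1 : ℝ)) + B⁻¹ • X := by
      ext ω; simp [div_eq_inv_mul]
    rw [hsplit]
    filter_upwards [condExp_add (integrable_const 1) (hX_int.smul B⁻¹) 𝒜,
      condExp_smul (μ := μ) B⁻¹ X 𝒜] with ω h₁ h₂
    simp [h₁, h₂, condExp_const h𝒜, div_eq_inv_mul]
  have hmono := condExp_mono (m := 𝒜) hexp_int ((integrable_const 1).add (hX_int.div_const B))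
    (hbdd.mono fun _ h => exp_log_two_div_mul_le_one_add hB h.1 h.2)
  filter_upwards [hmono, hlin, hcond] with ω h₁ h₂ h₃
  calc _ ≤ 1 + μ[X | 𝒜] ω / B := h₁.trans_eq h₂
    _ ≤ 1 + m / B := by gcongr
    _ ≤ Real.exp (m / B) := by linarith [Real.add_one_le_exp (m / B)]

lemma mgf_sum_range_le [IsProbabilityMeasure μ] {Y : ℕ → Ω → ℝ} {𝒢 : ℕ → MeasurableSpace Ω}
    (h𝒢 : ∀ i, 𝒢 i ≤ m0) (hmeas : ∀ i j, i < j → StronglyMeasurable[𝒢 j] (Y i)) (hB : 0 < B)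
    (hbdd : ∀ i, ∀ᵐ ω ∂μ, 0 ≤ Y i ω ∧ Y i ω ≤ B) (hcond : ∀ i, ∀ᵐ ω ∂μ, μ[Y i | 𝒢 i] ω ≤ m)
    (k : ℕ) :
    mgf (fun ω => ∑ i ∈ range k, Y i ω) μ (Real.log 2 / B) ≤ Real.exp (m / B) ^ k := by
  set t := Real.log 2 / B
  have hY : ∀ i, StronglyMeasurable (Y i) := fun i =>
    (hmeas i (i + 1) i.lt_succ_self).mono (h𝒢 _)
  have ht : 0 ≤ t := div_nonneg (Real.log_nonneg one_le_two) hB.le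
  have hexp_int := integrable_exp_mul_sum_range (fun i => (hY i).aestronglyMeasurable) ht
    fun i => (hbdd i).mono fun _ h => h.2
  induction k with
  | zero => simp [mgf]
  | succ k ih =>
    set P := fun ω => Real.exp (t * ∑ i ∈ range k, Y i ω)
    set E := fun ω => Real.exp (t * Y k ω)
    have hP : StronglyMeasurable[𝒢 k] P := Real.continuous_exp.comp_stronglyMeasurable
      ((Finset.stronglyMeasurable_fun_sum _ fun i hi => hmeas i k (mem_range.1 hi)).const_mul t)
    have hPE : (fun ω => Real.exp (t * ∑ i ∈ range (k + 1), Y i ω)) = P * E := by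
      ext ω; simp [P, E, sum_range_succ, mul_add, Real.exp_add]
    have hE_int : Integrable E μ := integrable_exp_mul_of_ae_le (hY k).aestronglyMeasurable ht
      ((hbdd k).mono fun _ h => h.2)
    have hpull : μ[P * E | 𝒢 k] =ᵐ[μ] P * μ[E | 𝒢 k] :=
      condExp_mul_of_stronglyMeasurable_left hP (hPE ▸ hexp_int (k + 1)) hE_int
    have hE_cond := condExp_exp_mul_le (h𝒢 k) (hY k).aestronglyMeasurable hB (hbdd k) (hcond k)
    calc mgf (fun ω => ∑ i ∈ range (k + 1), Y i ω) μ t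
        = ∫ ω, μ[P * E | 𝒢 k] ω ∂μ := by rw [mgf, hPE, integral_condExp (h𝒢 k)]
      _ = ∫ ω, P ω * μ[E | 𝒢 k] ω ∂μ := integral_congr_ae hpull
      _ ≤ ∫ ω, P ω * Real.exp (m / B) ∂μ := by
          refine integral_mono_ae (integrable_condExp.congr hpull) ((hexp_int k).mul_const _) ?_
          filter_upwards [hE_cond] with ω hω
          exact mul_le_mul_of_nonneg_left hω (Real.exp_pos _).le
      _ = mgf (fun ω => ∑ i ∈ range k, Y i ω) μ t * Real.exp (m / B) := integral_mul_const _ _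
      _ ≤ Real.exp (m / B) ^ (k + 1) := by
          rw [pow_succ]; gcongr

lemma measureReal_sum_range_ge_le [IsProbabilityMeasure μ] {Y : ℕ → Ω → ℝ}
    {𝒢 : ℕ → MeasurableSpace Ω} (h𝒢 : ∀ i, 𝒢 i ≤ m0)
    (hmeas : ∀ i j, i < j → StronglyMeasurable[𝒢 j] (Y i)) (hB : 0 < B)
    (hbdd : ∀ i, ∀ᵐ ω ∂μ, 0 ≤ Y i ω ∧ Y i ω ≤ B) (hcond : ∀ i, ∀ᵐ ω ∂μ, μ[Y i | 𝒢 i] ω ≤ m)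
    (ε : ℝ) (k : ℕ) :
    μ.real {ω | ε ≤ ∑ i ∈ range k, Y i ω} ≤
      Real.exp (-(Real.log 2 / B) * ε) * Real.exp (m / B) ^ k := by
  have ht : 0 ≤ Real.log 2 / B := div_nonneg (Real.log_nonneg one_le_two) hB.le
  have hY : ∀ i, AEStronglyMeasurable (Y i) μ := fun i =>
    ((hmeas i (i + 1) i.lt_succ_self).mono (h𝒢 _)).aestronglyMeasurable
  calc _ ≤ Real.exp (-(Real.log 2 / B) * ε) *
        mgf (fun ω => ∑ i ∈ range k, Y i ω) μ (Real.log 2 / B) :=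
        measure_ge_le_exp_mul_mgf ε ht
          (integrable_exp_mul_sum_range hY ht (fun i => (hbdd i).mono fun _ h => h.2) k)
    _ ≤ _ := by gcongr; exact mgf_sum_range_le h𝒢 hmeas hB hbdd hcond k

lemma measureReal_sum_two_mul_add_ge_le [IsProbabilityMeasure μ] {ℱ : Filtration ℤ m0}
    {Z : ℤ → Ω → ℝ} (hadapted : ∀ j : ℤ, 1 ≤ j → StronglyMeasurable[ℱ j] (Z j)) (hB : 0 < B)
    (hbdd : ∀ j : ℤ, 1 ≤ j → ∀ᵐ ω ∂μ, 0 ≤ Z j ω ∧ Z j ω ≤ B)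
    (hcond : ∀ j : ℤ, 1 ≤ j → ∀ᵐ ω ∂μ, (μ[Z j | ℱ (j - 2)]) ω ≤ m) {r : ℤ} (hr : 1 ≤ r)
    (ε : ℝ) (n : ℕ) :
    μ.real {ω | ε ≤ ∑ i ∈ range n, Z (2 * i + r) ω} ≤
      Real.exp (-(Real.log 2 / B) * ε) * Real.exp (m / B) ^ n :=
  measureReal_sum_range_ge_le (Y := fun i => Z (2 * i + r)) (𝒢 := fun i => ℱ (2 * i + r - 2))
    (fun _ => ℱ.le _) (fun i j hij => (hadapted _ (by omega)).mono (ℱ.mono (by omega))) hB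
    (fun _ => hbdd _ (by omega)) (fun _ => hcond _ (by omega)) ε n

end

lemma exp_neg_log_two_mul_mul_exp_pow_le {B m lam : ℝ} {n : ℕ} (hB : 0 < B) (hlam : 0 ≤ lam)
    (hnm : 4 * n * m ≤ lam) :
    Real.exp (-(Real.log 2 / B) * (lam / 2)) * Real.exp (m / B) ^ n ≤
      Real.exp (-(3 * lam) / (32 * B)) := by
  rw [← Real.exp_nat_mul, ← Real.exp_add, Real.exp_le_exp]
  have hlog : 0.6875 < Real.log 2 := lt_trans (by norm_num) Real.log_two_gt_d9
  have key : -Real.log 2 * (lam / 2) + n * m ≤ -(3 * lam) / 32 := by nlinarith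
  calc -(Real.log 2 / B) * (lam / 2) + n * (m / B) = (-Real.log 2 * (lam / 2) + n * m) / B := by
        field_simp
    _ ≤ -(3 * lam) / 32 / B := by gcongr
    _ = -(3 * lam) / (32 * B) := by rw [div_div]

theorem bernstein_two_step_general (Ω : Type*) [m0 : MeasurableSpace Ω] (μ : Measure Ω)
    [IsProbabilityMeasure μ] (ℱ : Filtration ℤ m0) (Z : ℤ → Ω → ℝ)
    (hadapted : ∀ j : ℤ, 1 ≤ j → StronglyMeasurable[ℱ j] (Z j))
    (B m : ℝ) (hB : 0 < B) (hm : 0 < m) (N : ℕ) (hNeven : Even N)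
    (hbdd : ∀ j : ℤ, 1 ≤ j → ∀ᵐ ω ∂μ, 0 ≤ Z j ω ∧ Z j ω ≤ B)
    (hcond : ∀ j : ℤ, 1 ≤ j → ∀ᵐ ω ∂μ, (μ[Z j | ℱ (j - 2)]) ω ≤ m)
    (lam : ℝ) (hlam : 2 * N * m ≤ lam) :
    μ {ω | lam ≤ ∑ j ∈ Finset.Icc (1 : ℤ) (N : ℤ), Z j ω}
      ≤ ENNReal.ofReal (2 * Real.exp (-(3 * lam) / (32 * B))) := by
  obtain ⟨n, rfl⟩ := hNeven
  have hnm : 4 * n * m ≤ lam := by push_cast at hlam; linarith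
  have hlam0 : 0 ≤ lam := le_trans (by positivity) hnm
  have htail : ∀ r : ℤ, 1 ≤ r → μ.real {ω | lam / 2 ≤ ∑ i ∈ range n, Z (2 * i + r) ω} ≤
      Real.exp (-(3 * lam) / (32 * B)) := fun r hr =>
    (measureReal_sum_two_mul_add_ge_le hadapted hB hbdd hcond hr _ n).trans
      (exp_neg_log_two_mul_mul_exp_pow_le hB hlam0 hnm)
  have hsplit : {ω | lam ≤ ∑ j ∈ Icc (1 : ℤ) ((n + n : ℕ) : ℤ), Z j ω} =
      {ω | lam / 2 + lam / 2 ≤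
        ∑ i ∈ range n, Z (2 * i + 1) ω + ∑ i ∈ range n, Z (2 * i + 2) ω} := by
    rw [add_halves, show ((n + n : ℕ) : ℤ) = 2 * n by push_cast; ring]
    simp_rw [sum_Icc_one_two_mul]
  rw [ENNReal.le_ofReal_iff_toReal_le (measure_ne_top _ _) (by positivity), ← measureReal_def,
    hsplit]
  linarith [measureReal_add_ge_le (μ := μ) (fun ω => ∑ i ∈ range n, Z (2 * i + 1) ω)
    (fun ω => ∑ i ∈ range n, Z (2 * i + 2) ω) (lam / 2) (lam / 2), htail 1 le_rfl,
    htail 2 one_le_two]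

/-- a Bernstein-type inequality for a nonnegative bounded process adapted
to a filtration indexed from `-1`, whose conditional mean given the σ-algebra two
steps back is at most `m`. -/
theorem bernstein_two_step (Ω : Type*) [m0 : MeasurableSpace Ω] (μ : Measure Ω)
    [IsProbabilityMeasure μ] (ℱ : Filtration ℤ m0) (Z : ℤ → Ω → ℝ)
    (hadapted : ∀ j : ℤ, 1 ≤ j → StronglyMeasurable[ℱ j] (Z j))
    (B m : ℝ) (hB : 0 < B) (hm : 0 < m) (N : ℕ) (hN : 0 < N) (hNeven : Even N)
    (hbdd : ∀ j : ℤ, 1 ≤ j → ∀ᵐ ω ∂μ, 0 ≤ Z j ω ∧ Z j ω ≤ B)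
    (hcond : ∀ j : ℤ, 1 ≤ j → ∀ᵐ ω ∂μ, (μ[Z j | ℱ (j - 2)]) ω ≤ m)
    (lam : ℝ) (hlam : 2 * N * m ≤ lam) :
    μ {ω | lam ≤ ∑ j ∈ Finset.Icc (1 : ℤ) (N : ℤ), Z j ω}
      ≤ ENNReal.ofReal (2 * Real.exp (-(3 * lam) / (32 * B))) :=
  bernstein_two_step_general Ω (m0 := m0) μ ℱ Z hadapted B m hB hm N hNeven hbdd hcond lam hlam
end

section
/- Let $\{X_j\}_{j \in \mathbb{N}}$ be an irreducible Markov chain on a countable state space $\mathcal{S}$. Suppose there exist a function $V : \mathcal{S} \to \mathbb{R}_+$, positive integers $1 \le L < K$, a finite set $B \subset \mathcal{S}$, $\epsilon > 0$, and $A < \infty$ such that: (i) $\mathrm{E}[V(X_{k+1})] < \infty$ whenever $\mathrm{E}[V(X_k)] < \infty$; (ii) $\mathrm{E}[V(X_{k+K}) - V(X_{k+L}) \mid X_k = x] \le -\epsilon + A \mathbb{1}_B(x)$ for all $x \in \mathcal{S}$. Then the chain is positive recurrent. -/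
open scoped ENNReal

section MarkovChain

variable {S : Type*}

/-- `P` is a Markov transition kernel on the state space `S`. -/
def IsTransKernel (P : S → S → ℝ≥0∞) : Prop := ∀ x, ∑' y, P x y = 1

/-- `n`-step transition probabilities of the time-homogeneous chain with kernel `P`. -/
noncomputable def stepN (P : S → S → ℝ≥0∞) : ℕ → S → S → ℝ≥0∞
  | 0 => fun x y => by classical exact if x = y then 1 else 0
  | n + 1 => fun x y => ∑' z, P x z * stepN P n z y

/-- The chain is irreducible: every state can reach every other state. -/
def MCIrreducible (P : S → S → ℝ≥0∞) : Prop := ∀ x y : S, ∃ n : ℕ, stepN P n x y ≠ 0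

/-- `firstHit P x n z`: the probability that the chain started at `z` first hits `x`
at time exactly `n`. -/
noncomputable def firstHit (P : S → S → ℝ≥0∞) (x : S) : ℕ → S → ℝ≥0∞
  | 0 => fun z => by classical exact if z = x then 1 else 0
  | n + 1 => fun z => by
      classical exact if z = x then 0 else ∑' w, P z w * firstHit P x n w

/-- `firstReturn P x n`: the probability that the chain started at `x` first returns
to `x` at time exactly `n ≥ 1`. -/
noncomputable def firstReturn (P : S → S → ℝ≥0∞) (x : S) : ℕ → ℝ≥0∞
  | 0 => 0
  | n + 1 => ∑' z, P x z * firstHit P x n z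

/-- The chain is positive recurrent: from every state, return is almost sure and the
expected return time is finite. -/
def MCPositiveRecurrent (P : S → S → ℝ≥0∞) : Prop :=
  ∀ x : S, (∑' n : ℕ, firstReturn P x n = 1) ∧
    (∑' n : ℕ, (n : ℝ≥0∞) * firstReturn P x n ≠ ⊤)

end MarkovChain

/-!
Summing the two-time drift over the window turns it into a one-step drift: `U = ∑_{L ≤ j < K} Pʲ V`
satisfies `P U + ε ≤ U + A·1_B`, because `P U - U = Pᴷ V - Pᴸ V` telescopes. This reduces the
theorem to Foster's criterion with a finite exceptional set.

For Foster's criterion fix a target state `x₀` and let `G z` be the expected number of visits to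
`B \ {x₀}` before `x₀`. Then `W = U + A·G` satisfies `P W + ε ≤ W` off `x₀`. `G` is bounded: by
irreducibility each `b ∈ B` escapes to `x₀` before returning to `b` with positive probability, and a
renewal argument bounds the visits to `b`. A finite `W` with `P W + ε ≤ W` off `x₀` bounds the
expected hitting time of `x₀` by `W / ε` and forces the hitting probability to be one.
-/

open Finset

section Kernel

variable {S : Type*}

def IsSubStochastic (Q : S → S → ℝ≥0∞) : Prop := ∀ x, ∑' y, Q x y ≤ 1

theorem IsTransKernel.isSubStochastic {P : S → S → ℝ≥0∞} (hP : IsTransKernel P) :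
    IsSubStochastic P :=
  fun x => (hP x).le

theorem IsSubStochastic.tsum_mul_le {Q : S → S → ℝ≥0∞} (hQ : IsSubStochastic Q)
    {f : S → ℝ≥0∞} {c : ℝ≥0∞} (hf : ∀ w, f w ≤ c) (z : S) : ∑' w, Q z w * f w ≤ c :=
  calc ∑' w, Q z w * f w ≤ ∑' w, Q z w * c := by gcongr with w; exact hf w
    _ ≤ 1 * c := by rw [ENNReal.tsum_mul_right]; gcongr; exact hQ z
    _ = c := one_mul c

theorem tsum_mul_sum_eq_sum_tsum_mul {ι : Type*} (s : Finset ι) (q : S → ℝ≥0∞)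
    (g : ι → S → ℝ≥0∞) : ∑' w, q w * ∑ i ∈ s, g i w = ∑ i ∈ s, ∑' w, q w * g i w := by
  simp_rw [Finset.mul_sum]
  exact Summable.tsum_finsetSum fun i _ => ENNReal.summable

/-- Row `x₀` set to zero: the chain is killed on reaching `x₀`. -/
noncomputable def killAt (Q : S → S → ℝ≥0∞) (x₀ : S) : S → S → ℝ≥0∞ :=
  fun z w => by classical exact if z = x₀ then 0 else Q z w

@[simp]
theorem killAt_self (Q : S → S → ℝ≥0∞) (x₀ w : S) : killAt Q x₀ x₀ w = 0 := by
  simp [killAt]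

theorem killAt_of_ne (Q : S → S → ℝ≥0∞) {x₀ z : S} (h : z ≠ x₀) (w : S) :
    killAt Q x₀ z w = Q z w := by
  simp [killAt, h]

theorem isSubStochastic_killAt {Q : S → S → ℝ≥0∞} (hQ : IsSubStochastic Q) (x₀ : S) :
    IsSubStochastic (killAt Q x₀) := by
  intro z
  by_cases h : z = x₀
  · simp [h]
  · simpa only [killAt_of_ne Q h] using hQ z

theorem stepN_zero_self (Q : S → S → ℝ≥0∞) (x : S) : stepN Q 0 x x = 1 := by
  simp [stepN]

theorem stepN_zero_of_ne (Q : S → S → ℝ≥0∞) {x y : S} (h : x ≠ y) : stepN Q 0 x y = 0 := by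
  simp [stepN, h]

theorem stepN_succ (Q : S → S → ℝ≥0∞) (n : ℕ) (x y : S) :
    stepN Q (n + 1) x y = ∑' z, Q x z * stepN Q n z y :=
  rfl

theorem IsSubStochastic.stepN_le_one {Q : S → S → ℝ≥0∞} (hQ : IsSubStochastic Q) (n : ℕ)
    (x y : S) : stepN Q n x y ≤ 1 := by
  induction n generalizing x with
  | zero =>
    by_cases h : x = y
    · simp [h, stepN_zero_self]
    · simp [stepN_zero_of_ne Q h]
  | succ n ih => exact hQ.tsum_mul_le (fun z => ih z) x

@[simp]
theorem firstHit_zero_self (Q : S → S → ℝ≥0∞) (x : S) : firstHit Q x 0 x = 1 := by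
  simp [firstHit]

theorem firstHit_zero_of_ne (Q : S → S → ℝ≥0∞) {x z : S} (h : z ≠ x) : firstHit Q x 0 z = 0 := by
  simp [firstHit, h]

@[simp]
theorem firstHit_succ_self (Q : S → S → ℝ≥0∞) (x : S) (n : ℕ) : firstHit Q x (n + 1) x = 0 := by
  simp [firstHit]

theorem firstHit_succ_of_ne (Q : S → S → ℝ≥0∞) {x z : S} (h : z ≠ x) (n : ℕ) :
    firstHit Q x (n + 1) z = ∑' w, Q z w * firstHit Q x n w := by
  simp [firstHit, h]

theorem natCast_mul_firstHit_self (Q : S → S → ℝ≥0∞) (x : S) (n : ℕ) :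
    (n : ℝ≥0∞) * firstHit Q x n x = 0 := by
  cases n <;> simp

theorem firstReturn_succ (Q : S → S → ℝ≥0∞) (x : S) (n : ℕ) :
    firstReturn Q x (n + 1) = ∑' z, Q x z * firstHit Q x n z :=
  rfl

noncomputable def hitProb (Q : S → S → ℝ≥0∞) (x z : S) : ℝ≥0∞ := ∑' n, firstHit Q x n z

theorem hitProb_self (Q : S → S → ℝ≥0∞) (x : S) : hitProb Q x x = 1 := by
  rw [hitProb, tsum_eq_zero_add' ENNReal.summable]
  simp

theorem hitProb_of_ne (Q : S → S → ℝ≥0∞) {x z : S} (h : z ≠ x) :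
    hitProb Q x z = ∑' w, Q z w * hitProb Q x w := by
  rw [hitProb, tsum_eq_zero_add' ENNReal.summable, firstHit_zero_of_ne Q h, zero_add]
  simp_rw [firstHit_succ_of_ne Q h, hitProb, ← ENNReal.tsum_mul_left]
  exact ENNReal.tsum_comm

theorem IsSubStochastic.sum_range_firstHit_le_one {Q : S → S → ℝ≥0∞} (hQ : IsSubStochastic Q)
    (x : S) (n : ℕ) (z : S) : ∑ m ∈ range n, firstHit Q x m z ≤ 1 := by
  induction n generalizing z with
  | zero => simp
  | succ n ih =>
    rw [sum_range_succ']
    by_cases h : z = x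
    · simp [h]
    · simp_rw [firstHit_succ_of_ne Q h, firstHit_zero_of_ne Q h, add_zero,
        ← tsum_mul_sum_eq_sum_tsum_mul]
      exact hQ.tsum_mul_le ih z

theorem IsSubStochastic.hitProb_le_one {Q : S → S → ℝ≥0∞} (hQ : IsSubStochastic Q)
    (x z : S) : hitProb Q x z ≤ 1 :=
  ENNReal.tsum_le_of_sum_range_le fun n => hQ.sum_range_firstHit_le_one x n z

theorem tsum_firstReturn (Q : S → S → ℝ≥0∞) (x : S) :
    ∑' n, firstReturn Q x n = ∑' z, Q x z * hitProb Q x z := by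
  rw [tsum_eq_zero_add' ENNReal.summable]
  simp_rw [firstReturn_succ, hitProb, ← ENNReal.tsum_mul_left]
  rw [firstReturn, zero_add, ENNReal.tsum_comm]

end Kernel

section Supersolution

variable {S : Type*} {P : S → S → ℝ≥0∞} {x₀ : S} {W : S → ℝ≥0∞}

theorem natCast_le_add_mul_hitProb (hP : IsTransKernel P)
    (hW : ∀ z, z ≠ x₀ → 1 + ∑' w, P z w * W w ≤ W z) (N : ℕ) (z : S) :
    (N : ℝ≥0∞) ≤ W z + N * hitProb P x₀ z := by
  induction N generalizing z with
  | zero => simp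
  | succ N ih =>
    by_cases h : z = x₀
    · simp [h, hitProb_self]
    calc ((N + 1 : ℕ) : ℝ≥0∞) = 1 + ∑' w, P z w * N := by
          rw [ENNReal.tsum_mul_right, hP z, one_mul]; push_cast; ring
      _ ≤ 1 + ∑' w, P z w * (W w + N * hitProb P x₀ w) := by gcongr with w; exact ih w
      _ = (1 + ∑' w, P z w * W w) + N * hitProb P x₀ z := by
          simp_rw [mul_add, ENNReal.tsum_add, hitProb_of_ne P h, mul_left_comm _ (N : ℝ≥0∞),
            ENNReal.tsum_mul_left, add_assoc]
      _ ≤ W z + (N + 1 : ℕ) * hitProb P x₀ z := by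
          gcongr
          · exact hW z h
          · exact_mod_cast N.le_succ

/-- The escape probability `1 - hitProb P x₀ z` is at most `W z / N` for every `N`. -/
theorem hitProb_eq_one_of_supersolution (hP : IsTransKernel P)
    (hW : ∀ z, z ≠ x₀ → 1 + ∑' w, P z w * W w ≤ W z) {z : S} (hWz : W z ≠ ⊤) :
    hitProb P x₀ z = 1 := by
  refine le_antisymm (hP.isSubStochastic.hitProb_le_one x₀ z) ?_
  by_contra! hlt
  obtain ⟨N, hN⟩ := ENNReal.exists_nat_mul_gt (tsub_pos_of_lt hlt).ne' hWz
  have hle : (N : ℝ≥0∞) * (1 - hitProb P x₀ z) ≤ W z := by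
    rw [ENNReal.mul_sub fun _ _ => ENNReal.natCast_ne_top N, mul_one, tsub_le_iff_right]
    exact natCast_le_add_mul_hitProb hP hW N z
  exact hN.not_ge hle

theorem sum_range_natCast_mul_firstHit_le (hP : IsSubStochastic P)
    (hW : ∀ z, z ≠ x₀ → 1 + ∑' w, P z w * W w ≤ W z) (N : ℕ) (z : S) :
    ∑ n ∈ range N, (n : ℝ≥0∞) * firstHit P x₀ n z ≤ W z := by
  induction N generalizing z with
  | zero => simp
  | succ N ih =>
    by_cases h : z = x₀
    · simp [h, natCast_mul_firstHit_self]
    calc ∑ n ∈ range (N + 1), (n : ℝ≥0∞) * firstHit P x₀ n z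
        = ∑' w, P z w * (∑ n ∈ range N, (n : ℝ≥0∞) * firstHit P x₀ n w
            + ∑ n ∈ range N, firstHit P x₀ n w) := by
          simp_rw [sum_range_succ', firstHit_succ_of_ne P h, ← sum_add_distrib,
            tsum_mul_sum_eq_sum_tsum_mul, ← ENNReal.tsum_mul_left]
          simp [add_mul, mul_left_comm]
      _ ≤ ∑' w, P z w * (W w + 1) := by
          gcongr with w
          · exact ih w
          · exact hP.sum_range_firstHit_le_one x₀ N w
      _ ≤ 1 + ∑' w, P z w * W w := by
          simp_rw [mul_add, mul_one, ENNReal.tsum_add, add_comm (∑' w, P z w * W w)]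
          gcongr
          exact hP z
      _ ≤ W z := hW z h

theorem tsum_natCast_mul_firstReturn (Q : S → S → ℝ≥0∞) (x : S) :
    ∑' n : ℕ, (n : ℝ≥0∞) * firstReturn Q x n
      = ∑' z, Q x z * (∑' n : ℕ, (n : ℝ≥0∞) * firstHit Q x n z + hitProb Q x z) := by
  rw [tsum_eq_zero_add' ENNReal.summable]
  simp_rw [hitProb, ← ENNReal.tsum_add, ← ENNReal.tsum_mul_left, firstReturn_succ,
    ← ENNReal.tsum_mul_left]
  rw [ENNReal.tsum_comm]
  simp only [Nat.cast_zero, zero_mul, zero_add, Nat.cast_succ]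
  exact tsum_congr fun z => tsum_congr fun n => by ring

theorem firstReturn_of_supersolution (hP : IsTransKernel P) (hWfin : ∀ z, W z ≠ ⊤)
    (hW : ∀ z, z ≠ x₀ → 1 + ∑' w, P z w * W w ≤ W z) (hPW : ∑' w, P x₀ w * W w ≠ ⊤) :
    (∑' n, firstReturn P x₀ n = 1) ∧ (∑' n : ℕ, (n : ℝ≥0∞) * firstReturn P x₀ n ≠ ⊤) := by
  have hhit : ∀ z, hitProb P x₀ z = 1 := fun z => hitProb_eq_one_of_supersolution hP hW (hWfin z)
  refine ⟨by simp [tsum_firstReturn, hhit, hP x₀], ?_⟩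
  have hmean : ∀ z, ∑' n : ℕ, (n : ℝ≥0∞) * firstHit P x₀ n z ≤ W z := fun z =>
    ENNReal.tsum_le_of_sum_range_le fun N =>
      sum_range_natCast_mul_firstHit_le hP.isSubStochastic hW N z
  refine ne_top_of_le_ne_top (b := ∑' w, P x₀ w * W w + 1) (by simpa using hPW) ?_
  calc ∑' n : ℕ, (n : ℝ≥0∞) * firstReturn P x₀ n
      ≤ ∑' z, P x₀ z * (W z + 1) := by
        rw [tsum_natCast_mul_firstReturn]
        gcongr with z
        exacts [hmean z, (hhit z).le]
    _ = ∑' w, P x₀ w * W w + 1 := by simp_rw [mul_add, mul_one, ENNReal.tsum_add, hP x₀]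

end Supersolution

section Green

variable {S : Type*}

noncomputable def green (Q : S → S → ℝ≥0∞) (z b : S) : ℝ≥0∞ := ∑' n, stepN Q n z b

theorem green_eq [DecidableEq S] (Q : S → S → ℝ≥0∞) (z b : S) :
    green Q z b = (if z = b then 1 else 0) + ∑' w, Q z w * green Q w b := by
  rw [green, tsum_eq_zero_add' ENNReal.summable]
  congr 1
  · split_ifs with h
    · rw [h, stepN_zero_self]
    · exact stepN_zero_of_ne Q h
  · simp_rw [stepN_succ, green, ← ENNReal.tsum_mul_left]
    exact ENNReal.tsum_comm

theorem stepN_eq_sum_firstHit_mul (Q : S → S → ℝ≥0∞) (b : S) (n : ℕ) (z : S) :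
    stepN Q n z b = ∑ m ∈ range (n + 1), firstHit Q b m z * stepN Q (n - m) b b := by
  induction n generalizing z with
  | zero =>
    by_cases h : z = b
    · simp [h]
    · simp [stepN_zero_of_ne Q h, firstHit_zero_of_ne Q h]
  | succ n ih =>
    by_cases h : z = b
    · rw [sum_range_succ', sum_eq_zero fun m _ => by simp [h]]
      simp [h]
    calc stepN Q (n + 1) z b
        = ∑ m ∈ range (n + 1), (∑' w, Q z w * firstHit Q b m w) * stepN Q (n - m) b b := by
          simp_rw [stepN_succ, ih, tsum_mul_sum_eq_sum_tsum_mul, ← ENNReal.tsum_mul_right,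
            mul_assoc]
      _ = ∑ m ∈ range (n + 1 + 1), firstHit Q b m z * stepN Q (n + 1 - m) b b := by
          simp [sum_range_succ' _ (n + 1), firstHit_zero_of_ne Q h, firstHit_succ_of_ne Q h]

theorem stepN_succ_self_eq_sum_firstReturn_mul (Q : S → S → ℝ≥0∞) (b : S) (n : ℕ) :
    stepN Q (n + 1) b b = ∑ m ∈ range (n + 1), firstReturn Q b (m + 1) * stepN Q (n - m) b b := by
  simp_rw [stepN_succ, stepN_eq_sum_firstHit_mul Q b n, tsum_mul_sum_eq_sum_tsum_mul,
    firstReturn_succ, ← ENNReal.tsum_mul_right, mul_assoc]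

theorem sum_range_sum_mul_sub_le (a c : ℕ → ℝ≥0∞) (N : ℕ) :
    ∑ n ∈ range N, ∑ m ∈ range (n + 1), a m * c (n - m) ≤ (∑' m, a m) * ∑ k ∈ range N, c k := by
  rw [sum_range_diag_flip N fun i j => a i * c j]
  calc ∑ m ∈ range N, ∑ k ∈ range (N - m), a m * c k
      ≤ ∑ m ∈ range N, a m * ∑ k ∈ range N, c k := by
        gcongr with m
        rw [← mul_sum]
        gcongr
        exact N.sub_le m
    _ ≤ (∑' m, a m) * ∑ k ∈ range N, c k := by
        rw [← sum_mul]
        gcongr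
        exact ENNReal.sum_le_tsum _

theorem sum_range_stepN_le_hitProb_mul (Q : S → S → ℝ≥0∞) (b z : S) (N : ℕ) :
    ∑ n ∈ range N, stepN Q n z b ≤ hitProb Q b z * ∑ n ∈ range N, stepN Q n b b := by
  simp_rw [stepN_eq_sum_firstHit_mul Q b _ z]
  exact sum_range_sum_mul_sub_le _ _ N

theorem IsSubStochastic.sum_range_stepN_self_le {Q : S → S → ℝ≥0∞} (hQ : IsSubStochastic Q)
    (b : S) (N : ℕ) :
    ∑ n ∈ range N, stepN Q n b b ≤ (1 - ∑' n, firstReturn Q b n)⁻¹ := by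
  set R := ∑' n, firstReturn Q b n
  set x := ∑ n ∈ range N, stepN Q n b b
  have hx : x ≠ ⊤ := ENNReal.sum_ne_top.2 fun n _ =>
    ne_top_of_le_ne_top ENNReal.one_ne_top (hQ.stepN_le_one n b b)
  have hrenewal : x ≤ 1 + R * x :=
    calc x ≤ ∑ n ∈ range (N + 1), stepN Q n b b := sum_le_sum_of_subset (by simp)
      _ = 1 + ∑ n ∈ range N, ∑ m ∈ range (n + 1), firstReturn Q b (m + 1) * stepN Q (n - m) b b := by
          rw [sum_range_succ', stepN_zero_self, add_comm]
          simp_rw [stepN_succ_self_eq_sum_firstReturn_mul]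
      _ ≤ 1 + R * x := by
          have hR : ∑' m, firstReturn Q b (m + 1) = R := by
            simp only [R]
            rw [tsum_eq_zero_add' ENNReal.summable (f := firstReturn Q b), firstReturn, zero_add]
          gcongr
          exact hR ▸ sum_range_sum_mul_sub_le _ _ N
  rw [ENNReal.le_inv_iff_mul_le, mul_comm, ENNReal.sub_mul fun _ _ => hx, one_mul,
    tsub_le_iff_right]
  exact hrenewal

theorem IsSubStochastic.green_le {Q : S → S → ℝ≥0∞} (hQ : IsSubStochastic Q) (z b : S) :
    green Q z b ≤ (1 - ∑' n, firstReturn Q b n)⁻¹ :=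
  ENNReal.tsum_le_of_sum_range_le fun N =>
    calc ∑ n ∈ range N, stepN Q n z b ≤ hitProb Q b z * ∑ n ∈ range N, stepN Q n b b :=
          sum_range_stepN_le_hitProb_mul Q b z N
      _ ≤ 1 * (1 - ∑' n, firstReturn Q b n)⁻¹ := by
          gcongr
          exacts [hQ.hitProb_le_one b z, hQ.sum_range_stepN_self_le b N]
      _ = _ := one_mul _

end Green

section Escape

variable {S : Type*} {P : S → S → ℝ≥0∞}

theorem firstHit_killAt_succ_start (Q : S → S → ℝ≥0∞) (a b : S) (m : ℕ) :
    firstHit (killAt Q a) b (m + 1) a = 0 := by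
  by_cases h : a = b
  · simp [h]
  · simp [firstHit_succ_of_ne _ h]

theorem IsSubStochastic.hitProb_killAt_add_hitProb_killAt_le_one (hP : IsSubStochastic P)
    {a b : S} (hab : a ≠ b) (z : S) :
    hitProb (killAt P b) a z + hitProb (killAt P a) b z ≤ 1 := by
  rw [hitProb, hitProb, ← ENNReal.tsum_add]
  refine ENNReal.tsum_le_of_sum_range_le fun n => ?_
  induction n generalizing z with
  | zero => simp
  | succ n ih =>
    rw [sum_range_succ']
    by_cases ha : z = a
    · simp [ha, firstHit_killAt_succ_start, firstHit_zero_of_ne _ hab]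
    by_cases hb : z = b
    · simp [hb, firstHit_killAt_succ_start, firstHit_zero_of_ne _ hab.symm]
    simp_rw [firstHit_succ_of_ne _ ha, firstHit_succ_of_ne _ hb, killAt_of_ne P ha,
      killAt_of_ne P hb, firstHit_zero_of_ne _ ha, firstHit_zero_of_ne _ hb, add_zero,
      ← ENNReal.tsum_add, ← mul_add, ← tsum_mul_sum_eq_sum_tsum_mul]
    exact hP.tsum_mul_le ih z

/-- The chain started at `b` reaches `x₀` before returning to `b` with positive probability. -/
theorem tsum_mul_hitProb_killAt_ne_zero (hirr : MCIrreducible P) {b x₀ : S} (hb : b ≠ x₀) :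
    ∑' w, P b w * hitProb (killAt P b) x₀ w ≠ 0 := by
  set η := ∑' w, P b w * hitProb (killAt P b) x₀ w
  have hreach : ∀ n z, stepN P n z x₀ ≠ 0 → hitProb (killAt P b) x₀ z ≠ 0 ∨ η ≠ 0 := by
    intro n
    induction n with
    | zero =>
      intro z hz
      by_cases h : z = x₀
      · simp [h, hitProb_self]
      · exact absurd (stepN_zero_of_ne P h) hz
    | succ n ih =>
      intro z hz
      obtain ⟨w, hw⟩ := not_forall.1 (mt ENNReal.tsum_eq_zero.2 hz)
      rcases ih w (right_ne_zero_of_mul hw) with hhit | hη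
      · by_cases hzx : z = x₀
        · simp [hzx, hitProb_self]
        have hpos : ∑' v, P z v * hitProb (killAt P b) x₀ v ≠ 0 := fun h =>
          mul_ne_zero (left_ne_zero_of_mul hw) hhit (ENNReal.tsum_eq_zero.1 h w)
        by_cases hzb : z = b
        · subst hzb
          exact Or.inr hpos
        · left
          rw [hitProb_of_ne _ hzx]
          simp_rw [killAt_of_ne P hzb]
          exact hpos
      · exact Or.inr hη
  obtain ⟨n, hn⟩ := hirr b x₀
  have hb0 : hitProb (killAt P b) x₀ b = 0 := by simp [hitProb_of_ne _ hb]
  exact (hreach n b hn).resolve_left (not_not.2 hb0)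

theorem IsSubStochastic.tsum_firstReturn_killAt_lt_one (hP : IsSubStochastic P)
    (hirr : MCIrreducible P) {b x₀ : S} (hb : b ≠ x₀) :
    ∑' n, firstReturn (killAt P x₀) b n < 1 := by
  have hR : ∑' n, firstReturn (killAt P x₀) b n = ∑' w, P b w * hitProb (killAt P x₀) b w := by
    simp_rw [tsum_firstReturn, killAt_of_ne P hb]
  have hsum : ∑' n, firstReturn (killAt P x₀) b n + ∑' w, P b w * hitProb (killAt P b) x₀ w ≤ 1 := by
    rw [hR, ← ENNReal.tsum_add]
    simp_rw [← mul_add]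
    exact hP.tsum_mul_le (hP.hitProb_killAt_add_hitProb_killAt_le_one hb) b
  refine lt_of_lt_of_le (ENNReal.lt_add_right ?_ (tsum_mul_hitProb_killAt_ne_zero hirr hb)) hsum
  exact ne_top_of_le_ne_top ENNReal.one_ne_top (le_self_add.trans hsum)

end Escape

section Foster

variable {S : Type*} {P : S → S → ℝ≥0∞}

theorem sum_green_killAt_eq [DecidableEq S] (P : S → S → ℝ≥0∞) (B : Finset S) {x₀ z : S}
    (hz : z ≠ x₀) :
    ∑ b ∈ B.erase x₀, green (killAt P x₀) z b
      = (if z ∈ B then 1 else 0) + ∑' w, P z w * ∑ b ∈ B.erase x₀, green (killAt P x₀) w b := by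
  simp_rw [green_eq (killAt P x₀) z, sum_add_distrib, sum_ite_eq, mem_erase, killAt_of_ne P hz,
    tsum_mul_sum_eq_sum_tsum_mul]
  simp [hz]

theorem drift_add_mul_sum_green [DecidableEq S] (B : Finset S) {U : S → ℝ≥0∞} {ε A : ℝ≥0∞}
    (hdrift : ∀ z, ∑' w, P z w * U w + ε ≤ U z + A * (B : Set S).indicator 1 z)
    {x₀ z : S} (hz : z ≠ x₀) :
    ∑' w, P z w * (U w + A * ∑ b ∈ B.erase x₀, green (killAt P x₀) w b) + ε
      ≤ U z + A * ∑ b ∈ B.erase x₀, green (killAt P x₀) z b := by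
  calc ∑' w, P z w * (U w + A * ∑ b ∈ B.erase x₀, green (killAt P x₀) w b) + ε
      = (∑' w, P z w * U w + ε) + A * ∑' w, P z w * ∑ b ∈ B.erase x₀, green (killAt P x₀) w b := by
        simp_rw [mul_add, ENNReal.tsum_add, mul_left_comm (P _ _) A, ENNReal.tsum_mul_left]
        ring
    _ ≤ (U z + A * (B : Set S).indicator 1 z)
          + A * ∑' w, P z w * ∑ b ∈ B.erase x₀, green (killAt P x₀) w b := by
        exact add_le_add_left (hdrift z) _
    _ = U z + A * ∑ b ∈ B.erase x₀, green (killAt P x₀) z b := by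
        rw [sum_green_killAt_eq P B hz, Set.indicator_apply]
        simp only [mem_coe, Pi.one_apply]
        ring

theorem IsTransKernel.firstReturn_of_drift (hP : IsTransKernel P) {x₀ : S} {W : S → ℝ≥0∞}
    {ε : ℝ≥0∞} (hε : ε ≠ 0) (hε_top : ε ≠ ⊤) (hWfin : ∀ z, W z ≠ ⊤)
    (hW : ∀ z, z ≠ x₀ → ∑' w, P z w * W w + ε ≤ W z) (hPW : ∑' w, P x₀ w * W w ≠ ⊤) :
    (∑' n, firstReturn P x₀ n = 1) ∧ (∑' n : ℕ, (n : ℝ≥0∞) * firstReturn P x₀ n ≠ ⊤) := by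
  refine firstReturn_of_supersolution hP (W := fun z => ε⁻¹ * W z)
    (fun z => ENNReal.mul_ne_top (ENNReal.inv_ne_top.2 hε) (hWfin z)) (fun z hz => ?_) ?_
  · calc 1 + ∑' w, P z w * (ε⁻¹ * W w) = ε⁻¹ * (∑' w, P z w * W w + ε) := by
          simp_rw [mul_add, ENNReal.inv_mul_cancel hε hε_top, mul_left_comm (P _ _),
            ENNReal.tsum_mul_left, add_comm]
      _ ≤ ε⁻¹ * W z := by gcongr; exact hW z hz
  · simp_rw [mul_left_comm (P _ _), ENNReal.tsum_mul_left]
    exact ENNReal.mul_ne_top (ENNReal.inv_ne_top.2 hε) hPW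

theorem foster_lyapunov (hP : IsTransKernel P) (hirr : MCIrreducible P) {U : S → ℝ≥0∞}
    (hU : ∀ z, U z ≠ ⊤) {B : Set S} (hB : B.Finite) {ε A : ℝ≥0∞} (hε : ε ≠ 0) (hA : A ≠ ⊤)
    (hdrift : ∀ z, ∑' w, P z w * U w + ε ≤ U z + A * B.indicator 1 z) :
    MCPositiveRecurrent P := by
  classical
  lift B to Finset S using hB
  intro x₀
  have hdrift₀ : ∑' w, P x₀ w * U w + ε ≤ U x₀ + A :=
    calc ∑' w, P x₀ w * U w + ε ≤ U x₀ + A * (B : Set S).indicator 1 x₀ := hdrift x₀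
      _ ≤ U x₀ + A * 1 := by gcongr; exact Set.indicator_le_self' (fun _ _ => zero_le_one) x₀
      _ = U x₀ + A := by rw [mul_one]
  have hUA : U x₀ + A ≠ ⊤ := ENNReal.add_ne_top.2 ⟨hU x₀, hA⟩
  have hε_top : ε ≠ ⊤ := ne_top_of_le_ne_top hUA (le_add_self.trans hdrift₀)
  set G : S → ℝ≥0∞ := fun z => ∑ b ∈ B.erase x₀, green (killAt P x₀) z b
  set C := ∑ b ∈ B.erase x₀, (1 - ∑' n, firstReturn (killAt P x₀) b n)⁻¹
  have hC : C ≠ ⊤ := ENNReal.sum_ne_top.2 fun b hb => ENNReal.inv_ne_top.2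
    (tsub_pos_of_lt (hP.isSubStochastic.tsum_firstReturn_killAt_lt_one hirr
      (ne_of_mem_erase hb))).ne'
  have hG : ∀ z, G z ≤ C := fun z => sum_le_sum fun b _ =>
    (isSubStochastic_killAt hP.isSubStochastic x₀).green_le z b
  have hUG : ∀ z, U z + A * G z ≠ ⊤ := fun z => ENNReal.add_ne_top.2
    ⟨hU z, ENNReal.mul_ne_top hA (ne_top_of_le_ne_top hC (hG z))⟩
  refine hP.firstReturn_of_drift hε hε_top hUG (fun z hz => drift_add_mul_sum_green B hdrift hz) ?_
  refine ne_top_of_le_ne_top (ENNReal.add_ne_top.2 ⟨hUA, ENNReal.mul_ne_top hA hC⟩) ?_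
  calc ∑' w, P x₀ w * (U w + A * G w) = ∑' w, P x₀ w * U w + A * ∑' w, P x₀ w * G w := by
        simp_rw [mul_add, ENNReal.tsum_add, mul_left_comm (P _ _) A, ENNReal.tsum_mul_left]
    _ ≤ U x₀ + A + A * C := by
        gcongr
        exacts [le_self_add.trans hdrift₀, hP.isSubStochastic.tsum_mul_le hG x₀]

end Foster

section TwoTime

variable {S : Type*} {P : S → S → ℝ≥0∞} {V : S → ℝ≥0∞}

theorem tsum_stepN_zero_mul (P : S → S → ℝ≥0∞) (V : S → ℝ≥0∞) (z : S) :
    ∑' y, stepN P 0 z y * V y = V z := by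
  rw [tsum_eq_single z fun y hy => by rw [stepN_zero_of_ne P hy.symm, zero_mul],
    stepN_zero_self, one_mul]

theorem tsum_stepN_succ_mul (P : S → S → ℝ≥0∞) (V : S → ℝ≥0∞) (j : ℕ) (z : S) :
    ∑' y, stepN P (j + 1) z y * V y = ∑' w, P z w * ∑' y, stepN P j w y * V y := by
  simp_rw [stepN_succ, ← ENNReal.tsum_mul_right, ← ENNReal.tsum_mul_left, mul_assoc]
  exact ENNReal.tsum_comm

theorem tsum_stepN_mul_ne_top (hV : ∀ x, V x ≠ ⊤)
    (hfin : ∀ (x₀ : S) (k : ℕ), (∑' y, stepN P k x₀ y * V y) ≠ ⊤ →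
      (∑' y, stepN P (k + 1) x₀ y * V y) ≠ ⊤) (j : ℕ) (z : S) :
    ∑' y, stepN P j z y * V y ≠ ⊤ := by
  induction j with
  | zero => simpa [tsum_stepN_zero_mul] using hV z
  | succ j ih => exact hfin z j ih

theorem sum_Ico_succ_add_eq {M : Type*} [AddCommMonoid M] (f : ℕ → M) {L K : ℕ} (h : L ≤ K) :
    ∑ j ∈ Ico L K, f (j + 1) + f L = ∑ j ∈ Ico L K, f j + f K := by
  induction K, h using Nat.le_induction with
  | base => simp
  | succ K hLK ih =>
    rw [sum_Ico_succ_top hLK, sum_Ico_succ_top hLK, add_right_comm, ih, add_right_comm]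

theorem drift_sum_Ico_of_twoTime {L K : ℕ} (hLK : L ≤ K)
    (hV : ∀ j z, ∑' y, stepN P j z y * V y ≠ ⊤) {B : Set S} {ε A : ℝ≥0∞}
    (hdrift : ∀ x : S, (∑' y, stepN P K x y * V y) + ε
      ≤ (∑' y, stepN P L x y * V y) + A * B.indicator 1 x) (z : S) :
    ∑' w, P z w * ∑ j ∈ Ico L K, ∑' y, stepN P j w y * V y + ε
      ≤ ∑ j ∈ Ico L K, ∑' y, stepN P j z y * V y + A * B.indicator 1 z := by
  set g : ℕ → ℝ≥0∞ := fun j => ∑' y, stepN P j z y * V y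
  have hPU : ∑' w, P z w * ∑ j ∈ Ico L K, ∑' y, stepN P j w y * V y = ∑ j ∈ Ico L K, g (j + 1) := by
    simp_rw [tsum_mul_sum_eq_sum_tsum_mul, g, tsum_stepN_succ_mul]
  rw [hPU, ← ENNReal.add_le_add_iff_right (hV L z)]
  calc ∑ j ∈ Ico L K, g (j + 1) + ε + g L = (∑ j ∈ Ico L K, g (j + 1) + g L) + ε := by ring
    _ = ∑ j ∈ Ico L K, g j + (g K + ε) := by rw [sum_Ico_succ_add_eq g hLK, add_assoc]
    _ ≤ ∑ j ∈ Ico L K, g j + (g L + A * B.indicator 1 z) := add_le_add_right (hdrift z) _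
    _ = ∑ j ∈ Ico L K, g j + A * B.indicator 1 z + g L := by ring

end TwoTime

theorem foster_lyapunov_two_time_general (S : Type*) (P : S → S → ℝ≥0∞)
    (hP : IsTransKernel P) (hirr : MCIrreducible P)
    (V : S → ℝ≥0∞) (hVfin : ∀ x, V x ≠ ⊤)
    (L K : ℕ) (hLK : L < K)
    (B : Set S) (hB : B.Finite) (ε A : ℝ≥0∞) (hε : 0 < ε) (hA : A ≠ ⊤)
    (hfin : ∀ (x₀ : S) (k : ℕ), (∑' y, stepN P k x₀ y * V y) ≠ ⊤ →
      (∑' y, stepN P (k + 1) x₀ y * V y) ≠ ⊤)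
    (hdrift : ∀ x : S,
      (∑' y, stepN P K x y * V y) + ε
        ≤ (∑' y, stepN P L x y * V y) + A * B.indicator 1 x) :
    MCPositiveRecurrent P := by
  have hV := tsum_stepN_mul_ne_top hVfin hfin
  exact foster_lyapunov hP hirr (fun z => ENNReal.sum_ne_top.2 fun j _ => hV j z) hB hε.ne' hA
    (drift_sum_Ico_of_twoTime hLK.le hV hdrift)

/-- a Foster–Lyapunov criterion with drift measured between two future
times `k+L < k+K`: an irreducible chain admitting a Lyapunov function `V` with
`E[V(X_{k+K}) - V(X_{k+L}) ∣ X_k = x] ≤ -ε + A·1_B(x)` (for a finite set `B`), and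
such that `E[V(X_{k+1})] < ∞` whenever `E[V(X_k)] < ∞`, is positive recurrent. -/
theorem foster_lyapunov_two_time (S : Type*) [Countable S] (P : S → S → ℝ≥0∞)
    (hP : IsTransKernel P) (hirr : MCIrreducible P)
    (V : S → ℝ≥0∞) (hVfin : ∀ x, V x ≠ ⊤)
    (L K : ℕ) (hL : 1 ≤ L) (hLK : L < K)
    (B : Set S) (hB : B.Finite) (ε A : ℝ≥0∞) (hε : 0 < ε) (hA : A ≠ ⊤)
    (hfin : ∀ (x₀ : S) (k : ℕ), (∑' y, stepN P k x₀ y * V y) ≠ ⊤ →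
      (∑' y, stepN P (k + 1) x₀ y * V y) ≠ ⊤)
    (hdrift : ∀ x : S,
      (∑' y, stepN P K x y * V y) + ε
        ≤ (∑' y, stepN P L x y * V y) + A * B.indicator 1 x) :
    MCPositiveRecurrent P :=
  foster_lyapunov_two_time_general S P hP hirr V hVfin L K hLK B hB ε A hε hA hfin hdrift
end

section
/- Let $\{\tilde{Z}_j\}_{j=1}^N$ be random variables adapted to a filtration $\{\mathcal{F}_j\}$ such that both $\{\sum_{l=1}^j \tilde{Z}_{2l}\}_j$ and $\{\sum_{l=1}^j \tilde{Z}_{2l-1}\}_j$ are martingales with respect to the even/odd subfiltrations, and let $\mathcal{C}$ be an event on which $|\tilde{Z}_j| \le K_r$ for all $j$. Suppose there exist martingales $\{Y_j\}$ with increments bounded by $K_r$ agreeing with the partial sums on $\mathcal{C}$. Then $\Pr\left(\max_{0 \le j \le N} \left|\sum_{l=1}^j \tilde{Z}_l\right| \ge \varepsilon, \; \mathcal{C}\right) \le 4 \exp\left(-\frac{\varepsilon^2}{4 N K_r^2}\right)$ for any $\varepsilon > 0$ and even $N$. -/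
/-!
On `C` the partial sums split into the even- and odd-indexed parts, which are the increments of
`Ye` and `Yo`; so a deviation `ε` of the whole sum forces a deviation `ε / 2` of `Ye` or `Yo`, and
each of these is controlled by the maximal Azuma–Hoeffding inequality. That inequality is proved
by Chernoff's method: by the conditional Hoeffding lemma `exp (t (Y j - Y 0))` is a nonnegative
submartingale whose mean grows at most by the factor `exp (t² K² / 2)` per step, Doob's maximal
inequality bounds the probability of its maximum exceeding `exp (t ε)`, and `t = ε / (M K²)`
is optimal.
-/

open MeasureTheory Real Finset

/-- The chord of the convex function `x ↦ exp (t * x)` over `[-K, K]`. -/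
theorem Real.exp_mul_le_cosh_add_div_mul_sinh {K x : ℝ} (t : ℝ) (hK : 0 < K) (hx : |x| ≤ K) :
    exp (t * x) ≤ cosh (t * K) + x / K * sinh (t * K) := by
  obtain ⟨hxl, hxu⟩ := abs_le.1 hx
  have ha : 0 ≤ (K - x) / (2 * K) := div_nonneg (by linarith) (by positivity)
  have hb : 0 ≤ (K + x) / (2 * K) := div_nonneg (by linarith) (by positivity)
  have hab : (K - x) / (2 * K) + (K + x) / (2 * K) = 1 := by field_simp; ring
  have hchord := convexOn_exp.2 (Set.mem_univ (-(t * K))) (Set.mem_univ (t * K)) ha hb hab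
  have hpoint : ((K - x) / (2 * K)) • -(t * K) + ((K + x) / (2 * K)) • (t * K) = t * x := by
    simp only [smul_eq_mul]; field_simp; ring
  rw [hpoint] at hchord
  refine hchord.trans_eq ?_
  rw [cosh_eq, sinh_eq, smul_eq_mul, smul_eq_mul]
  field_simp
  ring

section CondExpOfCenteredBounded

variable {Ω : Type*} {m m0 : MeasurableSpace Ω} {μ : Measure Ω} [IsFiniteMeasure μ] {D : Ω → ℝ}

theorem condExp_const_add_mul_ae_eq (hm : m ≤ m0) (hD : Integrable D μ)
    (hD0 : μ[D | m] =ᵐ[μ] 0) (a b : ℝ) :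
    μ[fun ω => a + b * D ω | m] =ᵐ[μ] fun _ => a := by
  have hsplit : (fun ω => a + b * D ω) = (fun _ => a) + b • D := rfl
  rw [hsplit]
  filter_upwards [condExp_add (integrable_const a) (hD.smul b) m, condExp_smul b D m, hD0]
    with ω hadd hsmul hzero
  simp [hadd, hsmul, hzero, condExp_const hm]

theorem one_le_condExp_exp_mul (hm : m ≤ m0) (hD : Integrable D μ) (hD0 : μ[D | m] =ᵐ[μ] 0)
    (t : ℝ) (hexp : Integrable (fun ω => exp (t * D ω)) μ) :
    (fun _ => 1) ≤ᵐ[μ] μ[fun ω => exp (t * D ω) | m] := by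
  refine (condExp_const_add_mul_ae_eq hm hD hD0 1 t).symm.le.trans
    (condExp_mono ((integrable_const 1).add (hD.const_mul t)) hexp (ae_of_all _ fun ω => ?_))
  linarith [add_one_le_exp (t * D ω)]

/-- The conditional form of Hoeffding's lemma. -/
theorem condExp_exp_mul_le_s8 {K : ℝ} (hm : m ≤ m0) (hD : Integrable D μ)
    (hD0 : μ[D | m] =ᵐ[μ] 0) (hK : 0 < K) (hDK : ∀ᵐ ω ∂μ, |D ω| ≤ K) (t : ℝ) :
    μ[fun ω => exp (t * D ω) | m] ≤ᵐ[μ] fun _ => exp (t ^ 2 * K ^ 2 / 2) := by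
  have hexp : Integrable (fun ω => exp (t * D ω)) μ :=
    ProbabilityTheory.integrable_exp_mul_of_mem_Icc hD.aemeasurable
      (hDK.mono fun _ h => abs_le.1 h)
  have hchord : (fun ω => exp (t * D ω)) ≤ᵐ[μ]
      fun ω => cosh (t * K) + sinh (t * K) / K * D ω := by
    filter_upwards [hDK] with ω h
    rw [div_mul_comm]
    exact exp_mul_le_cosh_add_div_mul_sinh t hK h
  filter_upwards [condExp_mono hexp ((integrable_const _).add (hD.const_mul _)) hchord,
    condExp_const_add_mul_ae_eq hm hD hD0 (cosh (t * K)) (sinh (t * K) / K)] with ω hle heq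
  calc _ ≤ _ := hle
    _ = cosh (t * K) := heq
    _ ≤ exp ((t * K) ^ 2 / 2) := cosh_le_exp_half_sq _
    _ = exp (t ^ 2 * K ^ 2 / 2) := by ring_nf

end CondExpOfCenteredBounded

namespace MeasureTheory

section Martingale

variable {Ω : Type*} {m0 : MeasurableSpace Ω} {μ : Measure Ω} {𝒢 : Filtration ℕ m0}
  {Y : ℕ → Ω → ℝ} {K : ℝ}

theorem Martingale.condExp_sub_ae_eq_zero (hY : Martingale Y 𝒢 μ) (j : ℕ) :
    μ[fun ω => Y (j + 1) ω - Y j ω | 𝒢 j] =ᵐ[μ] 0 := by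
  filter_upwards [condExp_sub (hY.integrable (j + 1)) (hY.integrable j) (𝒢 j),
    hY.condExp_ae_eq (Nat.le_add_right j 1), hY.condExp_ae_eq (le_refl j)]
    with ω hsub hsucc hself
  change μ[Y (j + 1) - Y j | 𝒢 j] ω = 0
  rw [hsub, Pi.sub_apply, hsucc, hself, sub_self]

theorem ae_abs_sub_zero_le (hInc : ∀ j, ∀ᵐ ω ∂μ, |Y (j + 1) ω - Y j ω| ≤ K) (j : ℕ) :
    ∀ᵐ ω ∂μ, |Y j ω - Y 0 ω| ≤ j * K := by
  induction j with
  | zero => simp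
  | succ j ih =>
    filter_upwards [ih, hInc j] with ω hj hstep
    push_cast
    linarith [abs_sub_le (Y (j + 1) ω) (Y j ω) (Y 0 ω)]

variable [IsFiniteMeasure μ]

theorem integrable_exp_mul_sub_zero (hmeas : ∀ j, AEMeasurable (Y j) μ)
    (hInc : ∀ j, ∀ᵐ ω ∂μ, |Y (j + 1) ω - Y j ω| ≤ K) (t : ℝ) (j : ℕ) :
    Integrable (fun ω => exp (t * (Y j ω - Y 0 ω))) μ :=
  ProbabilityTheory.integrable_exp_mul_of_mem_Icc ((hmeas j).sub (hmeas 0))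
    ((ae_abs_sub_zero_le hInc j).mono fun _ h => abs_le.1 h)

theorem Martingale.condExp_exp_mul_sub_zero_succ_ae_eq (hY : Martingale Y 𝒢 μ)
    (hInc : ∀ j, ∀ᵐ ω ∂μ, |Y (j + 1) ω - Y j ω| ≤ K) (t : ℝ) (j : ℕ) :
    μ[fun ω => exp (t * (Y (j + 1) ω - Y 0 ω)) | 𝒢 j] =ᵐ[μ]
      fun ω => exp (t * (Y j ω - Y 0 ω)) *
        μ[fun ω => exp (t * (Y (j + 1) ω - Y j ω)) | 𝒢 j] ω := by
  have hmeas : ∀ j, AEMeasurable (Y j) μ := fun j => (hY.integrable j).aemeasurable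
  have hfactor : (fun ω => exp (t * (Y (j + 1) ω - Y 0 ω))) =
      (fun ω => exp (t * (Y j ω - Y 0 ω))) * fun ω => exp (t * (Y (j + 1) ω - Y j ω)) := by
    ext ω
    rw [Pi.mul_apply, ← exp_add]
    ring_nf
  rw [hfactor]
  refine condExp_mul_of_stronglyMeasurable_left ?_
    (hfactor ▸ integrable_exp_mul_sub_zero hmeas hInc t (j + 1))
    (ProbabilityTheory.integrable_exp_mul_of_mem_Icc ((hmeas (j + 1)).sub (hmeas j))
      ((hInc j).mono fun _ h => abs_le.1 h))
  exact continuous_exp.comp_stronglyMeasurable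
    (((hY.stronglyAdapted j).sub ((hY.stronglyAdapted 0).mono (𝒢.mono j.zero_le))).const_mul t)

theorem Martingale.submartingale_exp_mul_sub_zero (hY : Martingale Y 𝒢 μ)
    (hInc : ∀ j, ∀ᵐ ω ∂μ, |Y (j + 1) ω - Y j ω| ≤ K) (t : ℝ) :
    Submartingale (fun j ω => exp (t * (Y j ω - Y 0 ω))) 𝒢 μ := by
  refine submartingale_nat (fun j => ?_)
    (integrable_exp_mul_sub_zero (fun j => (hY.integrable j).aemeasurable) hInc t) fun j => ?_
  · exact continuous_exp.comp_stronglyMeasurable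
      (((hY.stronglyAdapted j).sub ((hY.stronglyAdapted 0).mono (𝒢.mono j.zero_le))).const_mul t)
  · have hexp : Integrable (fun ω => exp (t * (Y (j + 1) ω - Y j ω))) μ :=
      ProbabilityTheory.integrable_exp_mul_of_mem_Icc
        ((hY.integrable (j + 1)).aemeasurable.sub (hY.integrable j).aemeasurable)
        ((hInc j).mono fun _ h => abs_le.1 h)
    filter_upwards [hY.condExp_exp_mul_sub_zero_succ_ae_eq hInc t j,
      one_le_condExp_exp_mul (𝒢.le j) ((hY.integrable (j + 1)).sub (hY.integrable j))
        (hY.condExp_sub_ae_eq_zero j) t hexp] with ω hfactor hone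
    rw [hfactor]
    exact le_mul_of_one_le_right (exp_pos _).le hone

end Martingale

theorem Submartingale.measure_exists_le_le {Ω : Type*} {m0 : MeasurableSpace Ω} {μ : Measure Ω}
    [IsFiniteMeasure μ] {𝒢 : Filtration ℕ m0} {f : ℕ → Ω → ℝ} (hf : Submartingale f 𝒢 μ)
    (hnonneg : 0 ≤ f) {c : ℝ} (hc : 0 < c) (n : ℕ) :
    μ {ω | ∃ j ≤ n, c ≤ f j ω} ≤ ENNReal.ofReal ((∫ ω, f n ω ∂μ) / c) := by
  set S := {ω | (c.toNNReal : ℝ) ≤ (range (n + 1)).sup' nonempty_range_add_one fun k => f k ω}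
  have hS : {ω | ∃ j ≤ n, c ≤ f j ω} = S := by
    ext ω
    simp [S, Finset.le_sup'_iff, max_eq_left hc.le]
  have hdoob : ENNReal.ofReal c * μ S ≤ ENNReal.ofReal (∫ ω, f n ω ∂μ) :=
    (maximal_ineq hf hnonneg n).trans (ENNReal.ofReal_le_ofReal
      (setIntegral_le_integral (hf.integrable n) (ae_of_all _ fun ω => hnonneg n ω)))
  rw [hS, ENNReal.ofReal_div_of_pos hc, ENNReal.le_div_iff_mul_le (by simp [hc]) (by simp),
    mul_comm]
  exact hdoob

section Azuma

variable {Ω : Type*} {m0 : MeasurableSpace Ω} {μ : Measure Ω} [IsProbabilityMeasure μ]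
  {𝒢 : Filtration ℕ m0} {Y : ℕ → Ω → ℝ} {K : ℝ}

theorem Martingale.integral_exp_mul_sub_zero_le (hY : Martingale Y 𝒢 μ) (hK : 0 < K)
    (hInc : ∀ j, ∀ᵐ ω ∂μ, |Y (j + 1) ω - Y j ω| ≤ K) (t : ℝ) (j : ℕ) :
    ∫ ω, exp (t * (Y j ω - Y 0 ω)) ∂μ ≤ exp (j * (t ^ 2 * K ^ 2 / 2)) := by
  induction j with
  | zero => simp
  | succ j ih =>
    have hstep : μ[fun ω => exp (t * (Y (j + 1) ω - Y 0 ω)) | 𝒢 j] ≤ᵐ[μ]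
        fun ω => exp (t * (Y j ω - Y 0 ω)) * exp (t ^ 2 * K ^ 2 / 2) := by
      filter_upwards [hY.condExp_exp_mul_sub_zero_succ_ae_eq hInc t j,
        condExp_exp_mul_le_s8 (𝒢.le j) ((hY.integrable (j + 1)).sub (hY.integrable j))
          (hY.condExp_sub_ae_eq_zero j) hK (hInc j) t] with ω hfactor hle
      rw [hfactor]
      exact mul_le_mul_of_nonneg_left hle (exp_pos _).le
    calc ∫ ω, exp (t * (Y (j + 1) ω - Y 0 ω)) ∂μ
        = ∫ ω, μ[fun ω => exp (t * (Y (j + 1) ω - Y 0 ω)) | 𝒢 j] ω ∂μ :=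
          (integral_condExp (𝒢.le j)).symm
      _ ≤ ∫ ω, exp (t * (Y j ω - Y 0 ω)) * exp (t ^ 2 * K ^ 2 / 2) ∂μ :=
          integral_mono_ae integrable_condExp
            ((integrable_exp_mul_sub_zero (fun j => (hY.integrable j).aemeasurable) hInc t
              j).mul_const _)
            hstep
      _ ≤ exp (j * (t ^ 2 * K ^ 2 / 2)) * exp (t ^ 2 * K ^ 2 / 2) := by
          rw [integral_mul_const]
          exact mul_le_mul_of_nonneg_right ih (exp_pos _).le
      _ = exp ((j + 1 : ℕ) * (t ^ 2 * K ^ 2 / 2)) := by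
          rw [← exp_add]
          push_cast
          ring_nf

theorem Martingale.measure_exists_le_sub_zero_le_exp (hY : Martingale Y 𝒢 μ) (hK : 0 < K)
    (hInc : ∀ j, ∀ᵐ ω ∂μ, |Y (j + 1) ω - Y j ω| ≤ K) {t : ℝ} (ht : 0 ≤ t) (ε : ℝ) (M : ℕ) :
    μ {ω | ∃ j ≤ M, ε ≤ Y j ω - Y 0 ω}
      ≤ ENNReal.ofReal (exp (M * (t ^ 2 * K ^ 2 / 2) - t * ε)) := by
  have hsub : {ω | ∃ j ≤ M, ε ≤ Y j ω - Y 0 ω}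
      ⊆ {ω | ∃ j ≤ M, exp (t * ε) ≤ exp (t * (Y j ω - Y 0 ω))} := by
    rintro ω ⟨j, hj, hjε⟩
    exact ⟨j, hj, exp_le_exp.2 (mul_le_mul_of_nonneg_left hjε ht)⟩
  calc _ ≤ _ := measure_mono hsub
    _ ≤ ENNReal.ofReal ((∫ ω, exp (t * (Y M ω - Y 0 ω)) ∂μ) / exp (t * ε)) :=
        (hY.submartingale_exp_mul_sub_zero hInc t).measure_exists_le_le
          (fun _ _ => (exp_pos _).le) (exp_pos _) M
    _ ≤ _ := by
        rw [exp_sub]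
        gcongr
        exact hY.integral_exp_mul_sub_zero_le hK hInc t M

theorem Martingale.measure_exists_le_sub_zero_le (hY : Martingale Y 𝒢 μ) (hK : 0 < K)
    (hInc : ∀ j, ∀ᵐ ω ∂μ, |Y (j + 1) ω - Y j ω| ≤ K) {ε : ℝ} (hε : 0 ≤ ε) (M : ℕ) :
    μ {ω | ∃ j ≤ M, ε ≤ Y j ω - Y 0 ω} ≤ ENNReal.ofReal (exp (-ε ^ 2 / (2 * M * K ^ 2))) := by
  -- the optimal Chernoff parameter; for `M = 0` both bounds are `1`, as `ε / 0 = 0`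
  refine (hY.measure_exists_le_sub_zero_le_exp hK hInc (t := ε / (M * K ^ 2)) (by positivity)
    ε M).trans_eq ?_
  rcases M.eq_zero_or_pos with rfl | hM
  · simp
  · congr 2
    field_simp
    ring

theorem Martingale.measure_exists_le_abs_sub_zero_le (hY : Martingale Y 𝒢 μ) (hK : 0 < K)
    (hInc : ∀ j, ∀ᵐ ω ∂μ, |Y (j + 1) ω - Y j ω| ≤ K) {ε : ℝ} (hε : 0 ≤ ε) (M : ℕ) :
    μ {ω | ∃ j ≤ M, ε ≤ |Y j ω - Y 0 ω|}
      ≤ ENNReal.ofReal (2 * exp (-ε ^ 2 / (2 * M * K ^ 2))) := by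
  have hIncNeg : ∀ j, ∀ᵐ ω ∂μ, |(-Y) (j + 1) ω - (-Y) j ω| ≤ K := fun j =>
    (hInc j).mono fun ω h => by
      simp only [Pi.neg_apply]
      rwa [neg_sub_neg, abs_sub_comm]
  have hsub : {ω | ∃ j ≤ M, ε ≤ |Y j ω - Y 0 ω|}
      ⊆ {ω | ∃ j ≤ M, ε ≤ Y j ω - Y 0 ω} ∪ {ω | ∃ j ≤ M, ε ≤ (-Y) j ω - (-Y) 0 ω} := by
    rintro ω ⟨j, hj, hjε⟩
    rcases le_abs'.1 hjε with h | h
    · exact Or.inr ⟨j, hj, by simp only [Pi.neg_apply]; linarith⟩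
    · exact Or.inl ⟨j, hj, h⟩
  calc _ ≤ _ := measure_mono hsub
    _ ≤ _ := measure_union_le _ _
    _ ≤ _ := add_le_add (hY.measure_exists_le_sub_zero_le hK hInc hε M)
        (hY.neg.measure_exists_le_sub_zero_le hK hIncNeg hε M)
    _ = _ := by
        rw [← ENNReal.ofReal_add (by positivity) (by positivity)]
        congr 1
        ring

end Azuma

end MeasureTheory

theorem Finset.sum_Icc_eq_sum_Icc_even_add_sum_Icc_odd {M : Type*} [AddCommMonoid M]
    (f : ℕ → M) (j : ℕ) :
    ∑ l ∈ Icc 1 j, f l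
      = ∑ l ∈ Icc 1 (j / 2), f (2 * l) + ∑ l ∈ Icc 1 ((j + 1) / 2), f (2 * l - 1) := by
  induction j with
  | zero => simp
  | succ j ih =>
    rw [sum_Icc_succ_top (Nat.le_add_left 1 j), ih]
    rcases Nat.even_or_odd' j with ⟨m, rfl | rfl⟩
    · rw [show (2 * m + 1) / 2 = m by omega, show (2 * m + 1 + 1) / 2 = m + 1 by omega,
        show 2 * m / 2 = m by omega,
        sum_Icc_succ_top (Nat.le_add_left 1 m) (fun l => f (2 * l - 1)),
        show 2 * (m + 1) - 1 = 2 * m + 1 by omega, add_assoc]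
    · rw [show (2 * m + 1 + 1) / 2 = m + 1 by omega, show (2 * m + 1 + 1 + 1) / 2 = m + 1 by omega,
        show (2 * m + 1) / 2 = m by omega,
        sum_Icc_succ_top (Nat.le_add_left 1 m) (fun l => f (2 * l)),
        show 2 * (m + 1) = 2 * m + 1 + 1 by omega, add_right_comm]

theorem exists_half_le_abs_sum_even_or_odd {f : ℕ → ℝ} {ε : ℝ} {m j : ℕ} (hj : j ≤ 2 * m)
    (h : ε ≤ |∑ l ∈ Icc 1 j, f l|) :
    (∃ i ≤ m, ε / 2 ≤ |∑ l ∈ Icc 1 i, f (2 * l)|)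
      ∨ ∃ i ≤ m, ε / 2 ≤ |∑ l ∈ Icc 1 i, f (2 * l - 1)| := by
  rw [sum_Icc_eq_sum_Icc_even_add_sum_Icc_odd] at h
  by_contra! hsmall
  have heven := hsmall.1 (j / 2) (by omega)
  have hodd := hsmall.2 ((j + 1) / 2) (by omega)
  linarith [abs_add_le (∑ l ∈ Icc 1 (j / 2), f (2 * l))
    (∑ l ∈ Icc 1 ((j + 1) / 2), f (2 * l - 1))]

theorem modified_azuma_hoeffding_general {Ω : Type*} [m0 : MeasurableSpace Ω] (μ : Measure Ω)
    [IsProbabilityMeasure μ] (Z : ℕ → Ω → ℝ)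
    (N : ℕ) (hNeven : Even N) (K : ℝ) (hK : 0 < K)
    (C : Set Ω)
    (𝒢e 𝒢o : Filtration ℕ m0)
    (Ye Yo : ℕ → Ω → ℝ)
    (hYeMg : Martingale Ye 𝒢e μ) (hYoMg : Martingale Yo 𝒢o μ)
    (hYeInc : ∀ j, ∀ᵐ ω ∂μ, |Ye (j + 1) ω - Ye j ω| ≤ K)
    (hYoInc : ∀ j, ∀ᵐ ω ∂μ, |Yo (j + 1) ω - Yo j ω| ≤ K)
    (hYeAgree : ∀ ω ∈ C, ∀ j, Ye j ω = ∑ l ∈ Finset.Icc 1 j, Z (2 * l) ω)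
    (hYoAgree : ∀ ω ∈ C, ∀ j, Yo j ω = ∑ l ∈ Finset.Icc 1 j, Z (2 * l - 1) ω)
    (ε : ℝ) (hε : 0 < ε) :
    μ (C ∩ {ω | ∃ j ≤ N, ε ≤ |∑ l ∈ Finset.Icc 1 j, Z l ω|})
      ≤ ENNReal.ofReal (4 * Real.exp (-ε ^ 2 / (4 * N * K ^ 2))) := by
  obtain ⟨m, rfl⟩ := hNeven
  have hsub : C ∩ {ω | ∃ j ≤ m + m, ε ≤ |∑ l ∈ Icc 1 j, Z l ω|}
      ⊆ {ω | ∃ j ≤ m, ε / 2 ≤ |Ye j ω - Ye 0 ω|}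
        ∪ {ω | ∃ j ≤ m, ε / 2 ≤ |Yo j ω - Yo 0 ω|} := by
    rintro ω ⟨hωC, j, hj, hjε⟩
    simp only [Set.mem_union, Set.mem_ofPred_eq, hYeAgree ω hωC, hYoAgree ω hωC,
      Icc_eq_empty_of_lt zero_lt_one, sum_empty, sub_zero]
    exact exists_half_le_abs_sum_even_or_odd (by omega) hjε
  calc _ ≤ _ := measure_mono hsub
    _ ≤ _ := measure_union_le _ _
    _ ≤ _ := add_le_add (hYeMg.measure_exists_le_abs_sub_zero_le hK hYeInc (by positivity) m)
        (hYoMg.measure_exists_le_abs_sub_zero_le hK hYoInc (by positivity) m)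
    _ = _ := by
        rw [← ENNReal.ofReal_add (by positivity) (by positivity)]
        congr 1
        push_cast
        ring_nf

/-- a modified Azuma–Hoeffding inequality. Both the even- and the
odd-indexed partial sums of `Z̃` are martingales (with respect to the even/odd
subfiltrations), `|Z̃_j| ≤ K_r` on the event `C`, and there exist bounded-increment
martingales agreeing with the even/odd partial sums on `C`. Then
`Pr(max_{j ≤ N} |∑_{l ≤ j} Z̃_l| ≥ ε, C) ≤ 4 exp(-ε²/(4NK_r²))`. -/
theorem modified_azuma_hoeffding {Ω : Type*} [m0 : MeasurableSpace Ω] (μ : Measure Ω)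
    [IsProbabilityMeasure μ] (ℱ : Filtration ℕ m0) (Z : ℕ → Ω → ℝ)
    (hadapted : ∀ j : ℕ, 1 ≤ j → StronglyMeasurable[ℱ j] (Z j))
    (N : ℕ) (hN : 0 < N) (hNeven : Even N) (K : ℝ) (hK : 0 < K)
    (C : Set Ω) (hCmeas : MeasurableSet C)
    (hCbdd : ∀ ω ∈ C, ∀ j ∈ Finset.Icc 1 N, |Z j ω| ≤ K)
    (𝒢e 𝒢o : Filtration ℕ m0)
    (h𝒢e : ∀ j, 𝒢e j = ℱ (2 * j)) (h𝒢o : ∀ j, 𝒢o j = ℱ (2 * j - 1))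
    (hmgE : Martingale (fun j ω => ∑ l ∈ Finset.Icc 1 j, Z (2 * l) ω) 𝒢e μ)
    (hmgO : Martingale (fun j ω => ∑ l ∈ Finset.Icc 1 j, Z (2 * l - 1) ω) 𝒢o μ)
    (Ye Yo : ℕ → Ω → ℝ)
    (hYeMg : Martingale Ye 𝒢e μ) (hYoMg : Martingale Yo 𝒢o μ)
    (hYeInc : ∀ j, ∀ᵐ ω ∂μ, |Ye (j + 1) ω - Ye j ω| ≤ K)
    (hYoInc : ∀ j, ∀ᵐ ω ∂μ, |Yo (j + 1) ω - Yo j ω| ≤ K)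
    (hYeAgree : ∀ ω ∈ C, ∀ j, Ye j ω = ∑ l ∈ Finset.Icc 1 j, Z (2 * l) ω)
    (hYoAgree : ∀ ω ∈ C, ∀ j, Yo j ω = ∑ l ∈ Finset.Icc 1 j, Z (2 * l - 1) ω)
    (ε : ℝ) (hε : 0 < ε) :
    μ (C ∩ {ω | ∃ j ≤ N, ε ≤ |∑ l ∈ Finset.Icc 1 j, Z l ω|})
      ≤ ENNReal.ofReal (4 * Real.exp (-ε ^ 2 / (4 * N * K ^ 2))) :=
  modified_azuma_hoeffding_general (m0 := m0) μ Z N hNeven K hK C 𝒢e 𝒢o Ye Yo hYeMg hYoMg hYeInc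
    hYoInc hYeAgree hYoAgree ε hε
end

section
/- Let $G$ be a $k$-regular graph with girth strictly greater than $2\lceil \alpha \log_{k-1} n \rceil + 1$ where $G$ has $n$ vertices and $\alpha > 0$. Then any non-backtracking walk of length $T$ on $G$ visits each vertex at most $\lceil T / (\alpha \log_{k-1} n) \rceil + 1$ times; in particular, a non-backtracking walk of length $\lfloor c \log n \rfloor$ visits each vertex at most $\frac{c \log(k-1)}{2\alpha} + 1$ times (for $c > 0$ a constant and $n$ large enough). -/
/-- `p` is a non-backtracking walk of length `T` on `G` (adjacency and no
backtracking along the first `T` steps). -/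
def IsNBWalkOn {V : Type*} (G : SimpleGraph V) (T : ℕ) (p : ℕ → V) : Prop :=
  (∀ i, i < T → G.Adj (p i) (p (i + 1))) ∧ ∀ i, i + 2 ≤ T → p (i + 2) ≠ p i

/-!
If a non-backtracking walk is at the same vertex at times `i < j`, the shortest repetition
inside `[i, j]` closes a cycle of length at most `j - i`; that length is at least `3` because
the walk never stays put or backtracks. So when the girth exceeds `2L + 1`, visits to a vertex
are at least `2L + 2` steps apart, and among the times `0, …, T` there are at most
`T / (2L + 2) + 1 ≤ T / (2x) + 1` of them, where `L = ⌈x⌉` for `x = α log_{k-1} n > 0`.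
Both bounds follow from this one.
-/

namespace SimpleGraph

variable {V : Type*} {G : SimpleGraph V}

def Walk.ofSeq (p : ℕ → V) (a : ℕ) :
    (n : ℕ) → (∀ t < n, G.Adj (p (a + t)) (p (a + t + 1))) → G.Walk (p a) (p (a + n))
  | 0, _ => .nil
  | n + 1, h => (ofSeq p a n fun t ht => h t (by omega)).concat (h n n.lt_succ_self)

@[simp]
lemma Walk.length_ofSeq (p : ℕ → V) (a n : ℕ) (h) : (Walk.ofSeq (G := G) p a n h).length = n := by
  induction n with
  | zero => rfl
  | succ n ih => simp [ofSeq, ih]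

lemma Walk.support_ofSeq (p : ℕ → V) (a n : ℕ) (h) :
    (Walk.ofSeq (G := G) p a n h).support = (List.range (n + 1)).map fun t => p (a + t) := by
  induction n with
  | zero => simp [ofSeq]
  | succ n ih => simp [ofSeq, support_concat, ih, List.range_succ]

-- The closed walk `p a, p (a + 1), …, p (a + d)` is a cycle.
lemma egirth_le_of_injOn {p : ℕ → V} {a d : ℕ}
    (hadj : ∀ t < d, G.Adj (p (a + t)) (p (a + t + 1))) (hd : 3 ≤ d)
    (hclosed : p a = p (a + d)) (hinj : Set.InjOn p (Set.Ioc a (a + d))) :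
    G.egirth ≤ d := by
  set w := (Walk.ofSeq p a d hadj).copy rfl hclosed.symm
  have hlen : w.length = d := by simp [w]
  have hcyc : w.IsCycle := by
    refine Walk.isCycle_iff_isPath_tail_and_le_length.mpr ⟨?_, hlen ▸ hd⟩
    have hnil : ¬ w.Nil := by rw [← Walk.length_eq_zero_iff]; omega
    rw [Walk.isPath_def, Walk.support_tail_of_not_nil _ hnil, Walk.support_copy,
      Walk.support_ofSeq, List.range_succ_eq_map, List.map_cons, List.tail_cons, List.map_map]
    refine List.nodup_range.map_on fun x hx y hy hxy => ?_
    simp only [List.mem_range] at hx hy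
    have := hinj (Set.mem_Ioc.mpr ⟨by omega, by omega⟩) (Set.mem_Ioc.mpr ⟨by omega, by omega⟩) hxy
    omega
  exact hlen ▸ egirth_le_length hcyc

end SimpleGraph

-- A repetition inside `(i, j]` is a strictly shorter closed stretch; induct on `j - i`.
lemma exists_injOn_Ioc_of_eq {α : Type*} (p : ℕ → α) {i j : ℕ} (hij : i < j) (heq : p i = p j) :
    ∃ a d, i ≤ a ∧ a + d ≤ j ∧ 0 < d ∧ p a = p (a + d) ∧ Set.InjOn p (Set.Ioc a (a + d)) := by
  induction hd : j - i using Nat.strong_induction_on generalizing i j with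
  | _ d ih =>
  by_cases hinj : Set.InjOn p (Set.Ioc i j)
  · exact ⟨i, j - i, le_rfl, by omega, by omega, by rwa [Nat.add_sub_cancel' hij.le],
      by rwa [Nat.add_sub_cancel' hij.le]⟩
  obtain ⟨s, hs, t, ht, hst, hne⟩ : ∃ s ∈ Set.Ioc i j, ∃ t ∈ Set.Ioc i j, p s = p t ∧ s < t := by
    simp only [Set.InjOn, not_forall] at hinj
    obtain ⟨s, hs, t, ht, hst, hne⟩ := hinj
    rcases Nat.lt_or_gt_of_ne hne with h | h
    exacts [⟨s, hs, t, ht, hst, h⟩, ⟨t, ht, s, hs, hst.symm, h⟩]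
  obtain ⟨a, d', hsa, hat, hd', hclosed, hinj'⟩ := ih (t - s) (by grind) hne hst rfl
  exact ⟨a, d', by grind, by grind, hd', hclosed, hinj'⟩

-- `x ↦ x / g` embeds `s` into `range (T / g + 1)`.
lemma Finset.card_le_div_add_one_of_le_sub {s : Finset ℕ} {g T : ℕ} (hg : 0 < g)
    (hs : s ⊆ Finset.range (T + 1)) (hgap : ∀ x ∈ s, ∀ y ∈ s, x < y → g ≤ y - x) :
    s.card ≤ T / g + 1 := by
  have hmono : StrictMonoOn (· / g) s := fun x hx y hy hxy => by
    have := hgap x hx y hy hxy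
    rw [← Nat.add_one_le_iff, ← Nat.add_div_right _ hg]
    exact Nat.div_le_div_right (by omega)
  calc s.card = (s.image (· / g)).card := (Finset.card_image_of_injOn hmono.injOn).symm
    _ ≤ (Finset.range (T / g + 1)).card := by
      refine Finset.card_le_card fun m hm => ?_
      obtain ⟨x, hx, rfl⟩ := Finset.mem_image.mp hm
      have := Finset.mem_range.mp (hs hx)
      exact Finset.mem_range.mpr (Nat.lt_succ_of_le (Nat.div_le_div_right (by omega)))
    _ = T / g + 1 := Finset.card_range _

namespace IsNBWalkOn

open SimpleGraph

variable {V : Type*} {G : SimpleGraph V} {T : ℕ} {p : ℕ → V}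

lemma egirth_le_sub (hp : IsNBWalkOn G T p) {i j : ℕ} (hij : i < j) (hjT : j ≤ T)
    (heq : p i = p j) : G.egirth ≤ (j - i : ℕ) := by
  obtain ⟨a, d, hia, haj, hd, hclosed, hinj⟩ := exists_injOn_Ioc_of_eq p hij heq
  have hadj : ∀ t < d, G.Adj (p (a + t)) (p (a + t + 1)) := fun t ht => hp.1 (a + t) (by omega)
  have hd3 : 3 ≤ d := by
    rcases (by omega : d = 1 ∨ d = 2 ∨ 3 ≤ d) with rfl | rfl | h
    · exact (G.loopless.irrefl _ (hclosed ▸ hadj 0 one_pos)).elim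
    · exact absurd hclosed.symm (hp.2 a (by omega))
    · exact h
  exact (egirth_le_of_injOn hadj hd3 hclosed hinj).trans (by exact_mod_cast (by omega : d ≤ j - i))

lemma card_visits_le [DecidableEq V] (hp : IsNBWalkOn G T p) {L : ℕ}
    (hg : ((2 * L + 1 : ℕ) : ℕ∞) < G.egirth) (v : V) :
    ((Finset.range (T + 1)).filter (p · = v)).card ≤ T / (2 * L + 2) + 1 := by
  refine Finset.card_le_div_add_one_of_le_sub (by omega) (Finset.filter_subset _ _)
    fun x hx y hy hxy => ?_
  simp only [Finset.mem_filter, Finset.mem_range] at hx hy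
  have : 2 * L + 1 < y - x := by
    exact_mod_cast hg.trans_le (hp.egirth_le_sub hxy (by omega) (hx.2.trans hy.2.symm))
  omega

lemma card_visits_le_div [DecidableEq V] (hp : IsNBWalkOn G T p) {x : ℝ} (hx : 0 < x)
    (hg : ((2 * ⌈x⌉₊ + 1 : ℕ) : ℕ∞) < G.egirth) (v : V) :
    (((Finset.range (T + 1)).filter (p · = v)).card : ℝ) ≤ T / (2 * x) + 1 := by
  have hxL : x ≤ ⌈x⌉₊ := Nat.le_ceil x
  calc (((Finset.range (T + 1)).filter (p · = v)).card : ℝ)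
      ≤ ((T / (2 * ⌈x⌉₊ + 2) : ℕ) : ℝ) + 1 := by exact_mod_cast hp.card_visits_le hg v
    _ ≤ T / ((2 * ⌈x⌉₊ + 2 : ℕ) : ℝ) + 1 := by gcongr; exact Nat.cast_div_le
    _ ≤ T / (2 * x) + 1 := by gcongr; push_cast; linarith

end IsNBWalkOn

/-- on a `k`-regular graph on `n` vertices of girth greater than
`2⌈α log_{k-1} n⌉ + 1`, any non-backtracking walk of length `T` visits each vertex
at most `⌈T/(α log_{k-1} n)⌉ + 1` times; in particular, a non-backtracking walk of
length `⌊c log n⌋` visits each vertex at most `c log(k-1)/(2α) + 1` times, for all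
sufficiently large `n`. -/
theorem nb_walk_visit_count (k : ℕ) (hk : 3 ≤ k) (α c : ℝ) (hα : 0 < α)
    (hc : 0 < c) :
    (∀ (V : Type) (_ : Fintype V) (_ : DecidableEq V) (G : SimpleGraph V) (_ : DecidableRel G.Adj),
      (∀ w : V, G.degree w = k) →
      ((2 * ⌈α * Real.logb ((k : ℝ) - 1) (Fintype.card V)⌉₊ + 1 : ℕ) : ℕ∞)
          < G.egirth →
      ∀ (T : ℕ) (p : ℕ → V), IsNBWalkOn G T p → ∀ v : V,
        ((Finset.range (T + 1)).filter (fun i => p i = v)).card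
          ≤ ⌈(T : ℝ) / (α * Real.logb ((k : ℝ) - 1) (Fintype.card V))⌉₊ + 1) ∧
    (∃ N₀ : ℕ, ∀ n : ℕ, N₀ ≤ n →
      ∀ (G : SimpleGraph (Fin n)) (_ : DecidableRel G.Adj),
        (∀ w : Fin n, G.degree w = k) →
        ((2 * ⌈α * Real.logb ((k : ℝ) - 1) n⌉₊ + 1 : ℕ) : ℕ∞) < G.egirth →
        ∀ p : ℕ → Fin n, IsNBWalkOn G ⌊c * Real.log n⌋₊ p → ∀ v : Fin n,
          (((Finset.range (⌊c * Real.log n⌋₊ + 1)).filter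
              (fun i => p i = v)).card : ℝ)
            ≤ c * Real.log ((k : ℝ) - 1) / (2 * α) + 1) := by
  have hk1 : (1 : ℝ) < k - 1 := by
    have : (3 : ℝ) ≤ k := by exact_mod_cast hk
    linarith
  have hscale_pos {m : ℕ} (hm : 1 < m) : 0 < α * Real.logb ((k : ℝ) - 1) m :=
    mul_pos hα (Real.logb_pos hk1 (by exact_mod_cast hm))
  refine ⟨fun V _ _ G _ hreg hgirth T p hp v => ?_, ⟨2, fun n hn G _ _ hgirth p hp v => ?_⟩⟩
  · set x := α * Real.logb ((k : ℝ) - 1) (Fintype.card V)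
    have hx : 0 < x := hscale_pos (by have := hreg v ▸ G.degree_lt_card_verts v; omega)
    suffices h : (((Finset.range (T + 1)).filter (p · = v)).card : ℝ) ≤ ⌈T / x⌉₊ + 1 by
      exact_mod_cast h
    calc (((Finset.range (T + 1)).filter (p · = v)).card : ℝ)
        ≤ T / (2 * x) + 1 := hp.card_visits_le_div hx hgirth v
      _ ≤ T / x + 1 := by gcongr; linarith
      _ ≤ ⌈T / x⌉₊ + 1 := by gcongr; exact Nat.le_ceil _
  · set x := α * Real.logb ((k : ℝ) - 1) n with hx_def
    have hx : 0 < x := hscale_pos (by omega)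
    have hlogn : 0 < Real.log n := Real.log_pos (by exact_mod_cast (by omega : 1 < n))
    calc _ ≤ ⌊c * Real.log n⌋₊ / (2 * x) + 1 := hp.card_visits_le_div hx hgirth v
      _ ≤ c * Real.log n / (2 * x) + 1 := by
        gcongr
        exact Nat.floor_le (by positivity)
      _ = c * Real.log ((k : ℝ) - 1) / (2 * α) + 1 := by
        rw [hx_def, Real.logb]
        field_simp
end

section
/- Let $W_1, W_2$ be two independent non-backtracking random walks on a $k$-regular graph $G$ on $n$ vertices with girth greater than $2\lceil \alpha \log_{k-1} n \rceil + 1$, started from independent uniformly random directed edges. Then for any $0 \le r < s$ with $s - r \le \alpha \log_{k-1} n$, $\Pr(W_1(r) = W_1(s)) \le n^{-\alpha}$, and for all $r, s \ge 0$, $\Pr(W_1(r) = W_2(s)) \le \frac{1+n^{-1}}{n}$. -/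
/-!
Both walks are almost surely non-backtracking walks in `G`, and by induction on time the directed
edge `(W j, W (j + 1))` stays uniform on the `n k` directed edges, so every `W j` is uniform on the
vertices. A non-backtracking walk shorter than the girth is a path, so it never revisits a vertex:
the single-walk collision probability is `0`. For independent walks the collision probability at
fixed times is `∑ v, n⁻¹ P(W₂ s = v) = n⁻¹`.
-/

open MeasureTheory ProbabilityTheory
open scoped ENNReal

/-- `W` is a non-backtracking random walk on the `k`-regular graph `G` on `Fin n`
started from a uniformly random directed edge: the initial directed edge
`(W 0, W 1)` is uniform among the `nk` directed edges, and given any admissible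
history up to time `j ≥ 1`, the next vertex is uniform among the `k - 1` neighbours
of the current vertex other than the previous one. -/
def IsNBRW {n : ℕ} {Ω : Type*} [MeasurableSpace Ω] (μ : Measure Ω)
    (G : SimpleGraph (Fin n)) (k : ℕ) (W : ℕ → Ω → Fin n) : Prop :=
  (∀ i, Measurable (W i)) ∧
  (∀ u v : Fin n, G.Adj u v →
    μ {ω | W 0 ω = u ∧ W 1 ω = v} = ENNReal.ofReal (1 / ((n : ℝ) * k))) ∧
  (∀ j : ℕ, 1 ≤ j → ∀ h : ℕ → Fin n, ∀ w : Fin n,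
    G.Adj (h j) w → w ≠ h (j - 1) →
      μ ({ω | W (j + 1) ω = w} ∩ {ω | ∀ i ≤ j, W i ω = h i})
        = μ {ω | ∀ i ≤ j, W i ω = h i} / ((k : ℝ≥0∞) - 1))

namespace SimpleGraph

variable {V : Type*} {G : SimpleGraph V}

theorem Walk.isPath_of_isChain_of_length_lt_egirth {u v : V} (p : G.Walk u v)
    (hp : p.edges.IsChain (· ≠ ·)) (hlen : p.length < G.egirth) : p.IsPath := by
  classical
  induction p with
  | nil => exact .nil
  | @cons u' v' _ head tail ih =>
    have hchain := List.isChain_cons.mp (edges_cons head tail ▸ hp)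
    have htail : tail.IsPath := ih hchain.2 (lt_of_le_of_lt (by simp) hlen)
    refine (cons_isPath_iff head tail).mpr ⟨htail, fun hu => ?_⟩
    have hcycle : (cons head (tail.takeUntil u' hu)).IsCycle := by
      refine (cons_isCycle_iff _ head).mpr ⟨htail.takeUntil hu, fun he => ?_⟩
      -- a path from `v'` to `u'` through the edge `u'v'` is that edge, so `p` backtracks
      have hsnd := (htail.takeUntil hu).eq_snd_of_mem_edges (Sym2.eq_swap ▸ he)
      rw [snd_takeUntil head.ne] at hsnd
      cases tail with
      | nil => simp_all [head.ne]
      | cons h' t => exact hchain.1 s(v', u') (by simp [hsnd]) Sym2.eq_swap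
    refine (egirth_le_length hcycle).not_gt (lt_of_le_of_lt ?_ hlen)
    simpa using tail.length_takeUntil_le_length hu

variable (G) in
def IsNonBacktracking (f : ℕ → V) : Prop :=
  ∀ i, G.Adj (f i) (f (i + 1)) ∧ f (i + 2) ≠ f i

def seqWalk (f : ℕ → V) (hf : ∀ i, G.Adj (f i) (f (i + 1))) : (m : ℕ) → G.Walk (f 0) (f m)
  | 0 => .nil
  | m + 1 => .cons (hf 0) (seqWalk (fun i => f (i + 1)) (fun i => hf (i + 1)) m)

@[simp]
lemma length_seqWalk (f : ℕ → V) (hf : ∀ i, G.Adj (f i) (f (i + 1))) (m : ℕ) :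
    (seqWalk f hf m).length = m := by
  induction m generalizing f with
  | zero => rfl
  | succ m ih => simp [seqWalk, ih]

lemma isChain_ne_edges_seqWalk {f : ℕ → V} (hf : G.IsNonBacktracking f) (m : ℕ) :
    (seqWalk f (fun i => (hf i).1) m).edges.IsChain (· ≠ ·) := by
  induction m generalizing f with
  | zero => simp [seqWalk]
  | succ m ih =>
    refine List.isChain_cons.mpr ⟨fun e he => ?_, ih fun i => hf (i + 1)⟩
    cases m with
    | zero => simp [seqWalk] at he
    | succ m =>
      simp only [seqWalk, Walk.darts_cons, List.map_cons, List.head?_cons, Option.mem_def,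
        Option.some.injEq] at he
      simp [← he, (hf 0).1.ne, (hf 0).2.symm]

theorem IsNonBacktracking.apply_ne {f : ℕ → V} (hf : G.IsNonBacktracking f) {r s : ℕ}
    (hrs : r < s) (hlen : ((s - r : ℕ) : ℕ∞) < G.egirth) : f r ≠ f s := by
  intro heq
  have hg : G.IsNonBacktracking (fun i => f (r + i)) := fun i => by
    simpa only [← add_assoc] using hf (r + i)
  have hpath := (seqWalk _ (fun i => (hg i).1) (s - r)).isPath_of_isChain_of_length_lt_egirth
    (isChain_ne_edges_seqWalk hg _) (by simpa using hlen)
  have hloop : (fun i => f (r + i)) (s - r) = (fun i => f (r + i)) 0 := by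
    simp [Nat.add_sub_cancel' hrs.le, heq]
  have hnil := Walk.isPath_iff_nil.mp ((Walk.isPath_copy _ rfl hloop).mpr hpath)
  simp only [← Walk.length_eq_zero_iff, Walk.length_copy, length_seqWalk] at hnil
  omega

lemma IsRegularOfDegree.card_erase_neighborFinset [Fintype V] [DecidableEq V]
    [DecidableRel G.Adj] {k : ℕ} (hreg : G.IsRegularOfDegree k) {u v : V} (h : G.Adj v u) :
    ((G.neighborFinset v).erase u).card = k - 1 := by
  rw [Finset.card_erase_of_mem ((G.mem_neighborFinset v u).mpr h),
    G.card_neighborFinset_eq_degree, hreg.degree_eq]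

lemma IsRegularOfDegree.card_filter_adj [Fintype V] [DecidableRel G.Adj] {k : ℕ}
    (hreg : G.IsRegularOfDegree k) :
    (Finset.univ.filter fun b : V × V => G.Adj b.1 b.2).card = Fintype.card V * k := by
  rw [Finset.card_filter, Fintype.sum_prod_type]
  simp_rw [← Finset.card_filter, ← G.neighborFinset_eq_filter, G.card_neighborFinset_eq_degree,
    hreg.degree_eq, Finset.sum_const, Finset.card_univ, smul_eq_mul]

end SimpleGraph

lemma ENNReal.natCast_sub_one_mul_div {k : ℕ} (hk : 2 ≤ k) (x : ℝ≥0∞) :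
    ((k - 1 : ℕ) : ℝ≥0∞) * (x / ((k : ℝ≥0∞) - 1)) = x := by
  have hk' : (1 : ℝ≥0∞) < k := by exact_mod_cast hk
  rw [ENNReal.natCast_sub, Nat.cast_one]
  exact ENNReal.mul_div_cancel (tsub_pos_of_lt hk').ne' (ENNReal.sub_ne_top (by simp))

lemma ENNReal.eq_zero_of_sum_le_sum {ι : Type*} [Fintype ι] {g : ι → ℝ≥0∞} {s : Finset ι}
    (hle : ∑ i, g i ≤ ∑ i ∈ s, g i) (hfin : ∑ i ∈ s, g i ≠ ∞) {i : ι} (hi : i ∉ s) :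
    g i = 0 := by
  classical
  rw [← Finset.sum_add_sum_compl s] at hle
  have hrest := ENNReal.le_of_add_le_add_left hfin (hle.trans (add_zero _).ge)
  exact Finset.sum_eq_zero_iff.mp (nonpos_iff_eq_zero.mp hrest) i (Finset.mem_compl.mpr hi)

namespace MeasureTheory

variable {Ω β : Type*} [MeasurableSpace Ω] [MeasurableSpace β] [MeasurableSingletonClass β]
  {μ : Measure Ω} {X : Ω → β}

lemma measure_eq_sum_measure_and_eq [Fintype β] (hX : Measurable X) (p : Ω → Prop) :
    μ {ω | p ω} = ∑ b, μ {ω | p ω ∧ X ω = b} := by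
  have := sum_measure_preimage_singleton (μ := μ.restrict {ω | p ω}) Finset.univ
    fun b _ => hX (measurableSet_singleton b)
  simp only [Measure.restrict_apply (hX (measurableSet_singleton _)), Finset.coe_univ,
    Set.preimage_univ, Measure.restrict_apply_univ] at this
  rw [← this]
  exact Finset.sum_congr rfl fun b _ => congrArg μ (Set.inter_comm _ _)

lemma measure_preimage_inter_eq_div (hX : Measurable X) {A : Set Ω} (T : Finset β)
    {c : ℝ≥0∞} (h : ∀ b ∈ T, μ (X ⁻¹' {b} ∩ A) = μ (X ⁻¹' {b}) / c) :
    μ (X ⁻¹' T ∩ A) = μ (X ⁻¹' T) / c := by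
  have hfib : ∀ b ∈ T, MeasurableSet (X ⁻¹' {b}) := fun b _ => hX (measurableSet_singleton b)
  calc μ (X ⁻¹' T ∩ A) = μ.restrict A (X ⁻¹' T) :=
        (Measure.restrict_apply (hX T.measurableSet)).symm
    _ = ∑ b ∈ T, μ (X ⁻¹' {b}) / c := by
        rw [← sum_measure_preimage_singleton T hfib]
        exact Finset.sum_congr rfl fun b hb => by rw [Measure.restrict_apply (hfib b hb), h b hb]
    _ = μ (X ⁻¹' T) / c := by
        simp only [div_eq_mul_inv, ← Finset.sum_mul, sum_measure_preimage_singleton T hfib]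

end MeasureTheory

/-- `history W j ⁻¹' {f}` is the cylinder `{ω | ∀ i ≤ j, W i ω = f i}` of `IsNBRW`, indexed by a
finite type so that cylinders can be summed over. -/
def history {Ω β : Type*} (W : ℕ → Ω → β) (j : ℕ) (ω : Ω) : Fin (j + 1) → β :=
  fun i => W i ω

namespace IsNBRW

variable {n k : ℕ} {Ω : Type*} [MeasurableSpace Ω] {μ : Measure Ω} {G : SimpleGraph (Fin n)}
  {W : ℕ → Ω → Fin n}

lemma measurable_history (hW : IsNBRW μ G k W) (j : ℕ) : Measurable (history W j) :=
  measurable_pi_lambda _ fun i => hW.1 i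

lemma measure_history_inter (hW : IsNBRW μ G k W) (j : ℕ) (f : Fin (j + 2) → Fin n)
    {w : Fin n} (hadj : G.Adj (f ⟨j + 1, by omega⟩) w) (hne : w ≠ f ⟨j, by omega⟩) :
    μ (history W (j + 1) ⁻¹' {f} ∩ {ω | W (j + 2) ω = w})
      = μ (history W (j + 1) ⁻¹' {f}) / ((k : ℝ≥0∞) - 1) := by
  have hcyl : history W (j + 1) ⁻¹' {f}
      = {ω | ∀ i ≤ j + 1, W i ω = f ⟨min i (j + 1), by omega⟩} := by
    ext ω
    simp only [history, Set.mem_preimage, Set.mem_singleton_iff, funext_iff, Fin.forall_iff,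
      Set.mem_ofPred_eq]
    constructor
    · intro H i hi
      simpa [Nat.min_eq_left hi] using H i (by omega)
    · intro H i hi
      simpa [Nat.min_eq_left (Nat.le_of_lt_succ hi)] using H i (by omega)
  rw [hcyl, Set.inter_comm]
  exact hW.2.2 (j + 1) (by omega) _ w (by simpa using hadj) (by simpa using hne)

lemma measure_triple_of_adj (hW : IsNBRW μ G k W) (j : ℕ) {u v w : Fin n} (hvw : G.Adj v w)
    (hwu : w ≠ u) :
    μ {ω | W j ω = u ∧ W (j + 1) ω = v ∧ W (j + 2) ω = w}
      = μ {ω | W j ω = u ∧ W (j + 1) ω = v} / ((k : ℝ≥0∞) - 1) := by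
  classical
  let T : Finset (Fin (j + 2) → Fin n) :=
    Finset.univ.filter fun f => f ⟨j, by omega⟩ = u ∧ f ⟨j + 1, by omega⟩ = v
  have hT : {ω | W j ω = u ∧ W (j + 1) ω = v} = history W (j + 1) ⁻¹' T := by
    ext ω; simp [history, T]
  have := measure_preimage_inter_eq_div (hW.measurable_history (j + 1))
    (A := {ω | W (j + 2) ω = w}) T fun f hf => by
      obtain ⟨hfu, hfv⟩ := (Finset.mem_filter.mp hf).2
      exact hW.measure_history_inter j f (hfv ▸ hvw) (hfu ▸ hwu)
  rw [hT, ← this]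
  congr 1
  ext ω
  simp [history, T, and_assoc]

lemma measure_triple [IsFiniteMeasure μ] [DecidableRel G.Adj] (hW : IsNBRW μ G k W)
    (hk : 2 ≤ k) (hreg : G.IsRegularOfDegree k) (j : ℕ) {u v : Fin n} (huv : G.Adj u v)
    (w : Fin n) :
    μ {ω | W j ω = u ∧ W (j + 1) ω = v ∧ W (j + 2) ω = w}
      = if G.Adj v w ∧ w ≠ u then μ {ω | W j ω = u ∧ W (j + 1) ω = v} / ((k : ℝ≥0∞) - 1)
        else 0 := by
  split_ifs with h
  · exact hW.measure_triple_of_adj j h.1 h.2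
  -- the `k - 1` admissible continuations already carry the whole mass of the pair event
  refine ENNReal.eq_zero_of_sum_le_sum (s := (G.neighborFinset v).erase u)
    (g := fun w => μ {ω | W j ω = u ∧ W (j + 1) ω = v ∧ W (j + 2) ω = w}) (le_of_eq ?_)
    (ENNReal.sum_ne_top.mpr fun _ _ => measure_ne_top _ _)
    (by simpa using fun hwu hvw => h ⟨hvw, hwu⟩)
  calc ∑ w, μ {ω | W j ω = u ∧ W (j + 1) ω = v ∧ W (j + 2) ω = w}
      = μ {ω | W j ω = u ∧ W (j + 1) ω = v} := by
        simp_rw [measure_eq_sum_measure_and_eq (μ := μ) (hW.1 (j + 2))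
          (fun ω => W j ω = u ∧ W (j + 1) ω = v), and_assoc]
    _ = ∑ w ∈ (G.neighborFinset v).erase u,
          μ {ω | W j ω = u ∧ W (j + 1) ω = v} / ((k : ℝ≥0∞) - 1) := by
        rw [Finset.sum_const, hreg.card_erase_neighborFinset huv.symm, nsmul_eq_mul,
          ENNReal.natCast_sub_one_mul_div hk]
    _ = _ := Finset.sum_congr rfl fun w hw => by
        obtain ⟨hwu, hvw⟩ := Finset.mem_erase.mp hw
        exact (hW.measure_triple_of_adj j ((G.mem_neighborFinset v w).mp hvw) hwu).symm

lemma measure_initial_pair [IsProbabilityMeasure μ] [DecidableRel G.Adj] (hW : IsNBRW μ G k W)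
    (hn : 1 ≤ n) (hk : 1 ≤ k) (hreg : G.IsRegularOfDegree k) (u v : Fin n) :
    μ {ω | W 0 ω = u ∧ W 1 ω = v} = if G.Adj u v then ((n : ℝ≥0∞) * k)⁻¹ else 0 := by
  have hedge : ∀ u v, G.Adj u v → μ {ω | W 0 ω = u ∧ W 1 ω = v} = ((n : ℝ≥0∞) * k)⁻¹ :=
    fun u v h => by
      rw [hW.2.1 u v h, one_div, ENNReal.ofReal_inv_of_pos (by positivity),
        ENNReal.ofReal_mul (by positivity), ENNReal.ofReal_natCast, ENNReal.ofReal_natCast]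
  split_ifs with huv
  · exact hedge u v huv
  -- the `n k` directed edges already carry total mass one
  let E := Finset.univ.filter fun b : Fin n × Fin n => G.Adj b.1 b.2
  have hE : ∑ b ∈ E, μ {ω | W 0 ω = b.1 ∧ W 1 ω = b.2} = 1 := by
    rw [Finset.sum_congr rfl fun b hb => hedge b.1 b.2 (Finset.mem_filter.mp hb).2,
      Finset.sum_const, hreg.card_filter_adj, Fintype.card_fin, nsmul_eq_mul,
      Nat.cast_mul]
    exact ENNReal.mul_inv_cancel (by simp; omega) (by finiteness)
  refine ENNReal.eq_zero_of_sum_le_sum (s := E)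
    (g := fun b : Fin n × Fin n => μ {ω | W 0 ω = b.1 ∧ W 1 ω = b.2}) ?_
    (by rw [hE]; exact ENNReal.one_ne_top) (i := (u, v)) (by simpa [E] using huv)
  rw [hE]
  have hpair : Measurable fun ω => (W 0 ω, W 1 ω) := (hW.1 0).prodMk (hW.1 1)
  calc ∑ b : Fin n × Fin n, μ {ω | W 0 ω = b.1 ∧ W 1 ω = b.2}
      = μ ((fun ω => (W 0 ω, W 1 ω)) ⁻¹' ↑(Finset.univ : Finset (Fin n × Fin n))) := by
        rw [← sum_measure_preimage_singleton _ fun b _ => hpair (measurableSet_singleton b)]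
        simp only [Set.preimage, Set.mem_singleton_iff, Prod.ext_iff]
    _ ≤ 1 := prob_le_one

lemma measure_pair_succ [IsFiniteMeasure μ] [DecidableRel G.Adj] (hW : IsNBRW μ G k W)
    (hk : 2 ≤ k) (hreg : G.IsRegularOfDegree k) {q : ℝ≥0∞} {j : ℕ}
    (ih : ∀ u v, μ {ω | W j ω = u ∧ W (j + 1) ω = v} = if G.Adj u v then q else 0)
    (v w : Fin n) :
    μ {ω | W (j + 1) ω = v ∧ W (j + 2) ω = w} = if G.Adj v w then q else 0 := by
  rw [measure_eq_sum_measure_and_eq (hW.1 j)]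
  have hterm : ∀ u, μ {ω | (W (j + 1) ω = v ∧ W (j + 2) ω = w) ∧ W j ω = u}
      = if G.Adj u v ∧ G.Adj v w ∧ w ≠ u then q / ((k : ℝ≥0∞) - 1) else 0 := fun u => by
    have hset : {ω | (W (j + 1) ω = v ∧ W (j + 2) ω = w) ∧ W j ω = u}
        = {ω | W j ω = u ∧ W (j + 1) ω = v ∧ W (j + 2) ω = w} := by
      ext ω; simp only [Set.mem_ofPred_eq]; tauto
    rw [hset]
    by_cases huv : G.Adj u v
    · rw [hW.measure_triple hk hreg j huv w, ih, if_pos huv]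
      simp only [huv, true_and]
    · rw [if_neg fun h => huv h.1]
      exact measure_mono_null (t := {ω | W j ω = u ∧ W (j + 1) ω = v})
        (fun _ h => ⟨h.1, h.2.1⟩) (by rw [ih, if_neg huv])
  simp_rw [hterm]
  split_ifs with hvw
  · have hadm : Finset.univ.filter (fun u => G.Adj u v ∧ G.Adj v w ∧ w ≠ u)
        = (G.neighborFinset v).erase w := by
      ext u
      simp [G.adj_comm u v, hvw, ne_comm, and_comm]
    rw [← Finset.sum_filter, hadm, Finset.sum_const,
      hreg.card_erase_neighborFinset hvw, nsmul_eq_mul,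
      ENNReal.natCast_sub_one_mul_div hk]
  · simp [hvw]

lemma measure_pair [IsProbabilityMeasure μ] [DecidableRel G.Adj] (hW : IsNBRW μ G k W)
    (hn : 1 ≤ n) (hk : 2 ≤ k) (hreg : G.IsRegularOfDegree k) (j : ℕ) (u v : Fin n) :
    μ {ω | W j ω = u ∧ W (j + 1) ω = v} = if G.Adj u v then ((n : ℝ≥0∞) * k)⁻¹ else 0 := by
  induction j generalizing u v with
  | zero => exact hW.measure_initial_pair hn (by omega) hreg u v
  | succ j ih => exact hW.measure_pair_succ hk hreg ih u v

lemma measure_vertex [IsProbabilityMeasure μ] [DecidableRel G.Adj] (hW : IsNBRW μ G k W)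
    (hn : 1 ≤ n) (hk : 2 ≤ k) (hreg : G.IsRegularOfDegree k) (j : ℕ) (v : Fin n) :
    μ {ω | W j ω = v} = (n : ℝ≥0∞)⁻¹ := by
  rw [measure_eq_sum_measure_and_eq (hW.1 (j + 1))]
  simp_rw [hW.measure_pair hn hk hreg j, ← Finset.sum_filter, ← G.neighborFinset_eq_filter,
    Finset.sum_const, G.card_neighborFinset_eq_degree, hreg.degree_eq, nsmul_eq_mul]
  rw [ENNReal.mul_inv (by simp) (by simp), mul_left_comm,
    ENNReal.mul_inv_cancel (by simp; omega) (by simp), mul_one]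

lemma ae_isNonBacktracking [IsProbabilityMeasure μ] [DecidableRel G.Adj]
    (hW : IsNBRW μ G k W) (hn : 1 ≤ n) (hk : 2 ≤ k) (hreg : G.IsRegularOfDegree k) :
    ∀ᵐ ω ∂μ, G.IsNonBacktracking fun i => W i ω := by
  refine ae_all_iff.mpr fun i => Filter.Eventually.and (ae_iff.mpr ?_) (ae_iff.mpr ?_)
  · refine (measure_preimage_eq_zero_iff_of_countable (f := fun ω => (W i ω, W (i + 1) ω))
      (s := {b | ¬ G.Adj b.1 b.2}) (Set.to_countable _)).mpr fun b hb => ?_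
    have := hW.measure_pair hn hk hreg i b.1 b.2
    rw [if_neg hb] at this
    simpa [Set.preimage, Prod.ext_iff] using this
  · simp only [ne_eq, not_not]
    refine (measure_preimage_eq_zero_iff_of_countable
      (f := fun ω => (W i ω, W (i + 1) ω, W (i + 2) ω))
      (s := {b | b.2.2 = b.1}) (Set.to_countable _)).mpr fun ⟨u, v, w⟩ hwu => ?_
    obtain rfl : u = w := hwu.symm
    simp only [Set.preimage, Set.mem_singleton_iff, Prod.ext_iff]
    by_cases huv : G.Adj u v
    · simpa using hW.measure_triple hk hreg i huv u
    · exact measure_mono_null (t := {ω | W i ω = u ∧ W (i + 1) ω = v})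
        (fun _ h => ⟨h.1, h.2.1⟩) (by rw [hW.measure_pair hn hk hreg, if_neg huv])

lemma measure_return_eq_zero [IsProbabilityMeasure μ] [DecidableRel G.Adj] (hW : IsNBRW μ G k W)
    (hn : 1 ≤ n) (hk : 2 ≤ k) (hreg : G.IsRegularOfDegree k) {r s : ℕ} (hrs : r < s)
    (hlen : ((s - r : ℕ) : ℕ∞) < G.egirth) : μ {ω | W r ω = W s ω} = 0 := by
  simpa using ae_iff.mp ((hW.ae_isNonBacktracking hn hk hreg).mono fun ω hω =>
    hω.apply_ne hrs hlen)

end IsNBRW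

lemma measure_eq_eq_inv_card_of_indepFun {Ω β : Type*} [MeasurableSpace Ω] [Fintype β]
    [MeasurableSpace β] [MeasurableSingletonClass β] {μ : Measure Ω} [IsProbabilityMeasure μ]
    {X Y : Ω → β} (hX : Measurable X) (hY : Measurable Y) (hXY : IndepFun X Y μ)
    (hunif : ∀ b, μ (X ⁻¹' {b}) = (Fintype.card β : ℝ≥0∞)⁻¹) :
    μ {ω | X ω = Y ω} = (Fintype.card β : ℝ≥0∞)⁻¹ := by
  have hfib : ∀ b ∈ Finset.univ, MeasurableSet (Y ⁻¹' {b}) :=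
    fun b _ => hY (measurableSet_singleton b)
  rw [measure_eq_sum_measure_and_eq hX]
  calc ∑ b, μ {ω | X ω = Y ω ∧ X ω = b} = ∑ b, μ (X ⁻¹' {b}) * μ (Y ⁻¹' {b}) :=
        Finset.sum_congr rfl fun b _ => by
          rw [← hXY.measure_inter_preimage_eq_mul _ _ (measurableSet_singleton b)
            (measurableSet_singleton b)]
          congr 1
          ext ω
          simp only [Set.mem_ofPred_eq, Set.mem_inter_iff, Set.mem_preimage,
            Set.mem_singleton_iff]
          constructor
          · rintro ⟨h, rfl⟩; exact ⟨rfl, h.symm⟩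
          · rintro ⟨h₁, h₂⟩; exact ⟨h₁.trans h₂.symm, h₁⟩
    _ = (Fintype.card β : ℝ≥0∞)⁻¹ := by
        simp_rw [hunif, ← Finset.mul_sum, sum_measure_preimage_singleton _ hfib,
          Finset.coe_univ, Set.preimage_univ, measure_univ, mul_one]

theorem nbrw_collision_bounds_general (n k : ℕ) (hn : 1 ≤ n) (hk : 3 ≤ k) (α : ℝ)
    (G : SimpleGraph (Fin n)) [DecidableRel G.Adj]
    (hreg : ∀ w : Fin n, G.degree w = k)
    (hgirth : ((2 * ⌈α * Real.logb ((k : ℝ) - 1) n⌉₊ + 1 : ℕ) : ℕ∞) < G.egirth)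
    {Ω : Type*} [MeasurableSpace Ω] (μ : Measure Ω) [IsProbabilityMeasure μ]
    (W₁ W₂ : ℕ → Ω → Fin n)
    (hW₁ : IsNBRW μ G k W₁) (hW₂ : IsNBRW μ G k W₂)
    (hindep : IndepFun (fun ω i => W₁ i ω) (fun ω i => W₂ i ω) μ) :
    (∀ r s : ℕ, r < s → (s : ℝ) - r ≤ α * Real.logb ((k : ℝ) - 1) n →
      μ {ω | W₁ r ω = W₁ s ω} ≤ ENNReal.ofReal ((n : ℝ) ^ (-α))) ∧
    (∀ r s : ℕ,
      μ {ω | W₁ r ω = W₂ s ω} ≤ ENNReal.ofReal ((1 + 1 / (n : ℝ)) / n)) := by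
  have hk2 : 2 ≤ k := by omega
  refine ⟨fun r s hrs hlog => ?_, fun r s => ?_⟩
  · have hlen : ((s - r : ℕ) : ℕ∞) < G.egirth := by
      have hceil : s - r ≤ ⌈α * Real.logb ((k : ℝ) - 1) n⌉₊ := by
        have : ((s - r : ℕ) : ℝ) ≤ α * Real.logb ((k : ℝ) - 1) n := by
          rwa [Nat.cast_sub hrs.le]
        exact_mod_cast this.trans (Nat.le_ceil _)
      exact lt_of_le_of_lt (Nat.cast_le.mpr (by omega)) hgirth
    rw [hW₁.measure_return_eq_zero hn hk2 hreg hrs hlen]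
    exact zero_le
  · have hXY : IndepFun (W₁ r) (W₂ s) μ :=
      hindep.comp (measurable_pi_apply r) (measurable_pi_apply s)
    have hunif : ∀ v, μ (W₁ r ⁻¹' {v}) = (Fintype.card (Fin n) : ℝ≥0∞)⁻¹ := fun v => by
      rw [Fintype.card_fin]
      exact hW₁.measure_vertex hn hk2 hreg r v
    rw [measure_eq_eq_inv_card_of_indepFun (hW₁.1 r) (hW₂.1 s) hXY hunif, Fintype.card_fin]
    have hn' : (0 : ℝ) < n := by exact_mod_cast hn
    rw [← ENNReal.ofReal_natCast, ← ENNReal.ofReal_inv_of_pos hn', inv_eq_one_div]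
    gcongr
    linarith [one_div_pos.mpr hn']

/-- collision probabilities for two independent non-backtracking
random walks on a `k`-regular graph on `n` vertices with girth greater than
`2⌈α log_{k-1} n⌉ + 1`, started from independent uniform directed edges: a single
walk revisits a vertex within `α log_{k-1} n` steps with probability at most
`n^{-α}`, and two independent walks collide at any fixed pair of times with
probability at most `(1 + n⁻¹)/n`. -/
theorem nbrw_collision_bounds (n k : ℕ) (hn : 1 ≤ n) (hk : 3 ≤ k) (α : ℝ)
    (hα : 0 < α) (G : SimpleGraph (Fin n)) [DecidableRel G.Adj]
    (hreg : ∀ w : Fin n, G.degree w = k)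
    (hgirth : ((2 * ⌈α * Real.logb ((k : ℝ) - 1) n⌉₊ + 1 : ℕ) : ℕ∞) < G.egirth)
    {Ω : Type*} [MeasurableSpace Ω] (μ : Measure Ω) [IsProbabilityMeasure μ]
    (W₁ W₂ : ℕ → Ω → Fin n)
    (hW₁ : IsNBRW μ G k W₁) (hW₂ : IsNBRW μ G k W₂)
    (hindep : IndepFun (fun ω i => W₁ i ω) (fun ω i => W₂ i ω) μ) :
    (∀ r s : ℕ, r < s → (s : ℝ) - r ≤ α * Real.logb ((k : ℝ) - 1) n →
      μ {ω | W₁ r ω = W₁ s ω} ≤ ENNReal.ofReal ((n : ℝ) ^ (-α))) ∧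
    (∀ r s : ℕ,
      μ {ω | W₁ r ω = W₂ s ω} ≤ ENNReal.ofReal ((1 + 1 / (n : ℝ)) / n)) :=
  nbrw_collision_bounds_general n k hn hk α G hreg hgirth μ W₁ W₂ hW₁ hW₂ hindep
end
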